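/- arXiv:0911.2769 — 6 statements merged into one kernel-verified Lean document; each statement's English description precedes it below -/
import Mathlib

section
/- Let c be a 1-cochain of sl(2) with values in bilinear differential operators D_{λ,ν;μ} of the form c(X_h, f, g) = Σ_{i=0}^{k+1} β_i h' f^{(i)} g^{(k+1−i)} + Σ_{i=0}^{k} γ_i h'' f^{(i)} g^{(k−i)} with constant coefficients. Then c satisfies the 1-cocycle condition c([X_{h₁},X_{h₂}],f,g) = X_{h₁}·c(X_{h₂},f,g) − X_{h₂}·c(X_{h₁},f,g) for all h₁,h₂ ∈ {1,x,x²} if and only if for all 0 ≤ i ≤ k: 2(μ−λ−ν−k−1)γ_i + (i+1)(i+2λ)β_{i+1} + (k+1−i)(k−i+2ν)β_i = 0. -/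
/-- `L^μ_h(f) = hf' + μh'f`. -/
noncomputable def Lop (mu : ℝ) (h f : ℝ → ℝ) : ℝ → ℝ :=
  fun x => h x * deriv f x + mu * deriv h x * f x

/-- The `(k+2)`-homogeneous 1-cochain
`c(X_h,f,g) = Σ_{i=0}^{k+1} β_i h' f^{(i)} g^{(k+1−i)} + Σ_{i=0}^{k} γ_i h'' f^{(i)} g^{(k−i)}`. -/
noncomputable def cochain (k : ℕ) (β γ : ℕ → ℝ) (h f g : ℝ → ℝ) : ℝ → ℝ :=
  fun x =>
    (∑ i ∈ Finset.range (k + 2), β i * deriv h x * deriv^[i] f x * deriv^[k + 1 - i] g x) +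
    (∑ i ∈ Finset.range (k + 1), γ i * deriv (deriv h) x * deriv^[i] f x * deriv^[k - i] g x)

private lemma hda_self {u : ℝ → ℝ} (hu : ContDiff ℝ (↑(⊤:ℕ∞)) u) (x : ℝ) :
    HasDerivAt u (deriv u x) x :=
  ((hu.differentiable (by simp)) x).hasDerivAt

private lemma sm_deriv {u : ℝ → ℝ} (hu : ContDiff ℝ (↑(⊤:ℕ∞)) u) :
    ContDiff ℝ (↑(⊤:ℕ∞)) (deriv u) := (contDiff_infty_iff_deriv.mp hu).2

private lemma st5_hda {f : ℝ → ℝ} (hf : ContDiff ℝ (↑(⊤:ℕ∞)) f) (n : ℕ) (x : ℝ) :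
    HasDerivAt (deriv^[n] f) (deriv^[n+1] f x) x := by
  rw [Function.iterate_succ_apply']
  exact hda_self (hf.iterate_deriv n) x

private lemma hda_congr {f : ℝ → ℝ} {v w x : ℝ} (h : HasDerivAt f v x) (e : v = w) :
    HasDerivAt f w x := e ▸ h

private lemma d_one : deriv (fun _ : ℝ => (1:ℝ)) = fun _ => 0 := by funext x; simp
private lemma d_id : deriv (fun x : ℝ => x) = fun _ => 1 := by funext x; simp
private lemma d_sq : deriv (fun x : ℝ => x^2) = fun x => 2*x := by
  funext x; simp [deriv_pow]
private lemma d_2x : deriv (fun x : ℝ => 2*x) = fun _ => 2 := by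
  funext x
  have := ((hasDerivAt_id' x).const_mul (2:ℝ)).deriv
  simpa using this
private lemma d_c (c : ℝ) : deriv (fun _ : ℝ => c) = fun _ => 0 := by funext x; simp

private lemma lop_one (c : ℝ) (f : ℝ → ℝ) : Lop c (fun _ => 1) f = deriv f := by
  funext y; simp [Lop]

private lemma lop_id (c : ℝ) (f : ℝ → ℝ) :
    Lop c (fun x => x) f = fun y => y * deriv f y + c * f y := by
  funext y; simp [Lop]

private lemma lop_sq (c : ℝ) (f : ℝ → ℝ) :
    Lop c (fun x => x^2) f = fun y => y^2 * deriv f y + c * (2*y) * f y := by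
  funext y; simp [Lop, d_sq]

private lemma iterA {f : ℝ → ℝ} (hf : ContDiff ℝ (↑(⊤:ℕ∞)) f) (c : ℝ) :
    ∀ i, deriv^[i] (fun y => y * deriv f y + c * f y)
      = fun y => y * deriv^[i+1] f y + ((i:ℝ) + c) * deriv^[i] f y := by
  intro i
  induction i with
  | zero => funext y; simp
  | succ i ih =>
    rw [Function.iterate_succ_apply', ih]
    funext y
    have h1 := ((hasDerivAt_id' y).mul (st5_hda hf (i+1) y)).add
      ((st5_hda hf i y).const_mul ((i:ℝ) + c))
    refine h1.deriv.trans ?_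
    push_cast
    ring_nf

private lemma iterB {f : ℝ → ℝ} (hf : ContDiff ℝ (↑(⊤:ℕ∞)) f) (c : ℝ) :
    ∀ i, deriv^[i] (fun y => y^2 * deriv f y + c * (2*y) * f y)
      = fun y => y^2 * deriv^[i+1] f y + (2*(i:ℝ) + 2*c) * y * deriv^[i] f y
          + ((i:ℝ)*((i:ℝ)-1) + 2*c*(i:ℝ)) * deriv^[i-1] f y := by
  intro i
  induction i with
  | zero =>
    funext y
    simp only [Nat.zero_add, Nat.zero_sub, Function.iterate_one, Function.iterate_zero_apply,
      Nat.cast_zero]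
    ring
  | succ i ih =>
    rw [Function.iterate_succ_apply', ih]
    funext y
    have h1 := (((hasDerivAt_pow 2 y).mul (st5_hda hf (i+1) y)).add
      (((hasDerivAt_id' y).const_mul (2*(i:ℝ) + 2*c)).mul (st5_hda hf i y))).add
      ((st5_hda hf (i-1) y).const_mul ((i:ℝ)*((i:ℝ)-1) + 2*c*(i:ℝ)))
    refine h1.deriv.trans ?_
    cases i with
    | zero => push_cast; ring_nf
    | succ j =>
      simp only [Nat.succ_sub_one]
      push_cast
      ring_nf

private lemma cochain_hda {k : ℕ} {β γ : ℕ → ℝ} {h f g : ℝ → ℝ}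
    (hh : ContDiff ℝ (↑(⊤:ℕ∞)) h) (hf : ContDiff ℝ (↑(⊤:ℕ∞)) f)
    (hg : ContDiff ℝ (↑(⊤:ℕ∞)) g) (x : ℝ) :
    HasDerivAt (cochain k β γ h f g)
      ((∑ i ∈ Finset.range (k+2), β i * (deriv (deriv h) x * (deriv^[i] f x * deriv^[k+1-i] g x)
          + deriv h x * (deriv^[i+1] f x * deriv^[k+1-i] g x + deriv^[i] f x * deriv^[k+1-i+1] g x)))
       + ∑ i ∈ Finset.range (k+1), γ i * (deriv (deriv (deriv h)) x * (deriv^[i] f x * deriv^[k-i] g x)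
          + deriv (deriv h) x * (deriv^[i+1] f x * deriv^[k-i] g x + deriv^[i] f x * deriv^[k-i+1] g x))) x := by
  unfold cochain
  refine HasDerivAt.add (HasDerivAt.fun_sum fun i _ => ?_) (HasDerivAt.fun_sum fun i _ => ?_)
  · exact hda_congr ((((hda_self (sm_deriv hh) x).const_mul (β i)).mul
      (st5_hda hf i x)).mul (st5_hda hg (k+1-i) x)) (by simp only [Pi.mul_apply]; ring)
  · exact hda_congr ((((hda_self (sm_deriv (sm_deriv hh)) x).const_mul (γ i)).mul
      (st5_hda hf i x)).mul (st5_hda hg (k-i) x)) (by simp only [Pi.mul_apply]; ring)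

set_option maxHeartbeats 1000000 in
private lemma main_case {k : ℕ} {lam nu mu : ℝ} {β γ : ℕ → ℝ} {f g : ℝ → ℝ}
    (hf : ContDiff ℝ (↑(⊤:ℕ∞)) f) (hg : ContDiff ℝ (↑(⊤:ℕ∞)) g) (x : ℝ) :
    (Lop mu (fun x => x) (cochain k β γ (fun x => x^2) f g) x
        - cochain k β γ (fun x => x^2) (Lop lam (fun x => x) f) g x
        - cochain k β γ (fun x => x^2) f (Lop nu (fun x => x) g) x)
      - (Lop mu (fun x => x^2) (cochain k β γ (fun x => x) f g) x
        - cochain k β γ (fun x => x) (Lop lam (fun x => x^2) f) g x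
        - cochain k β γ (fun x => x) f (Lop nu (fun x => x^2) g) x)
      - cochain k β γ (fun y => y^2) f g x
    = ∑ i ∈ Finset.range (k+1),
        (2 * (mu - lam - nu - (k : ℝ) - 1) * γ i
          + ((i : ℝ) + 1) * ((i : ℝ) + 2 * lam) * β (i + 1)
          + ((k : ℝ) + 1 - (i : ℝ)) * ((k : ℝ) - (i : ℝ) + 2 * nu) * β i)
        * deriv^[i] f x * deriv^[k-i] g x := by
  have hsq : ContDiff ℝ (↑(⊤:ℕ∞)) (fun x : ℝ => x^2) := contDiff_id.pow 2
  have hid : ContDiff ℝ (↑(⊤:ℕ∞)) (fun x : ℝ => x) := contDiff_id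
  have hD2 := (cochain_hda (k := k) (β := β) (γ := γ) hsq hf hg x).deriv
  have hDx := (cochain_hda (k := k) (β := β) (γ := γ) hid hf hg x).deriv
  rw [d_sq, d_2x, d_c] at hD2
  rw [d_id, d_c, d_c] at hDx
  rw [lop_id mu, lop_sq mu, lop_id lam, lop_id nu, lop_sq lam, lop_sq nu]
  simp only []
  rw [hD2, hDx]
  simp only [cochain, iterA hf lam, iterA hg nu, iterB hf lam, iterB hg nu,
    d_id, d_sq, d_2x, d_one, d_c]
  simp only [mul_zero, zero_mul, add_zero, zero_add, Finset.sum_const_zero]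
  have e1 : (∑ i ∈ Finset.range (k + 2), β i * (2 * (deriv^[i] f x * deriv^[k + 1 - i] g x) + 2 * x * (deriv^[i + 1] f x * deriv^[k + 1 - i] g x + deriv^[i] f x * deriv^[k + 1 - i + 1] g x)))
      = 2 * (∑ i ∈ Finset.range (k + 2), β i * deriv^[i] f x * deriv^[k + 1 - i] g x) + 2 * x * (∑ i ∈ Finset.range (k + 2), β i * deriv^[i + 1] f x * deriv^[k + 1 - i] g x) + 2 * x * (∑ i ∈ Finset.range (k + 2), β i * deriv^[i] f x * deriv^[k + 1 - i + 1] g x) := by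
    simp only [Finset.mul_sum, ← Finset.sum_add_distrib, ← Finset.sum_sub_distrib]
    exact Finset.sum_congr rfl fun i _ => by ring
  have e2 : (∑ i ∈ Finset.range (k + 1), γ i * (2 * (deriv^[i + 1] f x * deriv^[k - i] g x + deriv^[i] f x * deriv^[k - i + 1] g x)))
      = 2 * (∑ i ∈ Finset.range (k + 1), γ i * deriv^[i + 1] f x * deriv^[k - i] g x) + 2 * (∑ i ∈ Finset.range (k + 1), γ i * deriv^[i] f x * deriv^[k - i + 1] g x) := by
    simp only [Finset.mul_sum, ← Finset.sum_add_distrib, ← Finset.sum_sub_distrib]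
    exact Finset.sum_congr rfl fun i _ => by ring
  have e3 : (∑ i ∈ Finset.range (k + 2), β i * (2 * x) * deriv^[i] f x * deriv^[k + 1 - i] g x)
      = 2 * x * (∑ i ∈ Finset.range (k + 2), β i * deriv^[i] f x * deriv^[k + 1 - i] g x) := by
    simp only [Finset.mul_sum, ← Finset.sum_add_distrib, ← Finset.sum_sub_distrib]
    exact Finset.sum_congr rfl fun i _ => by ring
  have e4 : (∑ i ∈ Finset.range (k + 1), γ i * 2 * deriv^[i] f x * deriv^[k - i] g x)
      = 2 * (∑ i ∈ Finset.range (k + 1), γ i * deriv^[i] f x * deriv^[k - i] g x) := by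
    simp only [Finset.mul_sum, ← Finset.sum_add_distrib, ← Finset.sum_sub_distrib]
    exact Finset.sum_congr rfl fun i _ => by ring
  have e5 : (∑ i ∈ Finset.range (k + 2), β i * (2 * x) * (x * deriv^[i + 1] f x + ((i:ℝ) + lam) * deriv^[i] f x) * deriv^[k + 1 - i] g x)
      = 2 * x * x * (∑ i ∈ Finset.range (k + 2), β i * deriv^[i + 1] f x * deriv^[k + 1 - i] g x) + 2 * x * (∑ i ∈ Finset.range (k + 2), (i:ℝ) * (β i * deriv^[i] f x * deriv^[k + 1 - i] g x)) + 2 * x * lam * (∑ i ∈ Finset.range (k + 2), β i * deriv^[i] f x * deriv^[k + 1 - i] g x) := by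
    simp only [Finset.mul_sum, ← Finset.sum_add_distrib, ← Finset.sum_sub_distrib]
    exact Finset.sum_congr rfl fun i _ => by ring
  have e6 : (∑ i ∈ Finset.range (k + 1), γ i * 2 * (x * deriv^[i + 1] f x + ((i:ℝ) + lam) * deriv^[i] f x) * deriv^[k - i] g x)
      = 2 * x * (∑ i ∈ Finset.range (k + 1), γ i * deriv^[i + 1] f x * deriv^[k - i] g x) + 2 * (∑ i ∈ Finset.range (k + 1), (i:ℝ) * (γ i * deriv^[i] f x * deriv^[k - i] g x)) + 2 * lam * (∑ i ∈ Finset.range (k + 1), γ i * deriv^[i] f x * deriv^[k - i] g x) := by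
    simp only [Finset.mul_sum, ← Finset.sum_add_distrib, ← Finset.sum_sub_distrib]
    exact Finset.sum_congr rfl fun i _ => by ring
  have e7 : (∑ i ∈ Finset.range (k + 2), β i * (2 * x) * deriv^[i] f x * (x * deriv^[k + 1 - i + 1] g x + ((((k + 1 - i : ℕ)):ℝ) + nu) * deriv^[k + 1 - i] g x))
      = 2 * x * x * (∑ i ∈ Finset.range (k + 2), β i * deriv^[i] f x * deriv^[k + 1 - i + 1] g x) + 2 * x * (k:ℝ) * (∑ i ∈ Finset.range (k + 2), β i * deriv^[i] f x * deriv^[k + 1 - i] g x) + 2 * x * (∑ i ∈ Finset.range (k + 2), β i * deriv^[i] f x * deriv^[k + 1 - i] g x) - 2 * x * (∑ i ∈ Finset.range (k + 2), (i:ℝ) * (β i * deriv^[i] f x * deriv^[k + 1 - i] g x)) + 2 * x * nu * (∑ i ∈ Finset.range (k + 2), β i * deriv^[i] f x * deriv^[k + 1 - i] g x) := by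
    simp only [Finset.mul_sum, ← Finset.sum_add_distrib, ← Finset.sum_sub_distrib]
    refine Finset.sum_congr rfl fun i hi => ?_
    have hik := Finset.mem_range.mp hi
    rw [Nat.cast_sub (by omega)]
    push_cast
    ring
  have e8 : (∑ i ∈ Finset.range (k + 1), γ i * 2 * deriv^[i] f x * (x * deriv^[k - i + 1] g x + ((((k - i : ℕ)):ℝ) + nu) * deriv^[k - i] g x))
      = 2 * x * (∑ i ∈ Finset.range (k + 1), γ i * deriv^[i] f x * deriv^[k - i + 1] g x) + 2 * (k:ℝ) * (∑ i ∈ Finset.range (k + 1), γ i * deriv^[i] f x * deriv^[k - i] g x) - 2 * (∑ i ∈ Finset.range (k + 1), (i:ℝ) * (γ i * deriv^[i] f x * deriv^[k - i] g x)) + 2 * nu * (∑ i ∈ Finset.range (k + 1), γ i * deriv^[i] f x * deriv^[k - i] g x) := by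
    simp only [Finset.mul_sum, ← Finset.sum_add_distrib, ← Finset.sum_sub_distrib]
    refine Finset.sum_congr rfl fun i hi => ?_
    have hik := Finset.mem_range.mp hi
    rw [Nat.cast_sub (by omega)]
    push_cast
    ring
  have e9 : (∑ i ∈ Finset.range (k + 2), β i * (1 * (deriv^[i + 1] f x * deriv^[k + 1 - i] g x + deriv^[i] f x * deriv^[k + 1 - i + 1] g x)))
      = (∑ i ∈ Finset.range (k + 2), β i * deriv^[i + 1] f x * deriv^[k + 1 - i] g x) + (∑ i ∈ Finset.range (k + 2), β i * deriv^[i] f x * deriv^[k + 1 - i + 1] g x) := by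
    simp only [Finset.mul_sum, ← Finset.sum_add_distrib, ← Finset.sum_sub_distrib]
    exact Finset.sum_congr rfl fun i _ => by ring
  have e10 : (∑ i ∈ Finset.range (k + 2), β i * 1 * deriv^[i] f x * deriv^[k + 1 - i] g x)
      = (∑ i ∈ Finset.range (k + 2), β i * deriv^[i] f x * deriv^[k + 1 - i] g x) := by
    exact Finset.sum_congr rfl fun i _ => by ring
  have e11 : (∑ i ∈ Finset.range (k + 2), β i * 1 * (x ^ 2 * deriv^[i + 1] f x + (2 * (i:ℝ) + 2 * lam) * x * deriv^[i] f x + ((i:ℝ) * ((i:ℝ) - 1) + 2 * lam * (i:ℝ)) * deriv^[i - 1] f x) * deriv^[k + 1 - i] g x)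
      = x ^ 2 * (∑ i ∈ Finset.range (k + 2), β i * deriv^[i + 1] f x * deriv^[k + 1 - i] g x) + 2 * x * (∑ i ∈ Finset.range (k + 2), (i:ℝ) * (β i * deriv^[i] f x * deriv^[k + 1 - i] g x)) + 2 * lam * x * (∑ i ∈ Finset.range (k + 2), β i * deriv^[i] f x * deriv^[k + 1 - i] g x) + (∑ i ∈ Finset.range (k + 2), β i * (((i:ℝ) * ((i:ℝ) - 1) + 2 * lam * (i:ℝ)) * deriv^[i - 1] f x) * deriv^[k + 1 - i] g x) := by
    simp only [Finset.mul_sum, ← Finset.sum_add_distrib, ← Finset.sum_sub_distrib]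
    exact Finset.sum_congr rfl fun i _ => by ring
  have e12 : (∑ i ∈ Finset.range (k + 2), β i * 1 * deriv^[i] f x * (x ^ 2 * deriv^[k + 1 - i + 1] g x + (2 * (((k + 1 - i : ℕ)):ℝ) + 2 * nu) * x * deriv^[k + 1 - i] g x + ((((k + 1 - i : ℕ)):ℝ) * ((((k + 1 - i : ℕ)):ℝ) - 1) + 2 * nu * (((k + 1 - i : ℕ)):ℝ)) * deriv^[k + 1 - i - 1] g x))
      = x ^ 2 * (∑ i ∈ Finset.range (k + 2), β i * deriv^[i] f x * deriv^[k + 1 - i + 1] g x) + 2 * x * (k:ℝ) * (∑ i ∈ Finset.range (k + 2), β i * deriv^[i] f x * deriv^[k + 1 - i] g x) + 2 * x * (∑ i ∈ Finset.range (k + 2), β i * deriv^[i] f x * deriv^[k + 1 - i] g x) - 2 * x * (∑ i ∈ Finset.range (k + 2), (i:ℝ) * (β i * deriv^[i] f x * deriv^[k + 1 - i] g x)) + 2 * nu * x * (∑ i ∈ Finset.range (k + 2), β i * deriv^[i] f x * deriv^[k + 1 - i] g x) + (∑ i ∈ Finset.range (k + 2), β i * (((((k + 1 - i : ℕ)):ℝ)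 * ((((k + 1 - i : ℕ)):ℝ) - 1) + 2 * nu * (((k + 1 - i : ℕ)):ℝ)) * deriv^[k + 1 - i - 1] g x) * deriv^[i] f x) := by
    simp only [Finset.mul_sum, ← Finset.sum_add_distrib, ← Finset.sum_sub_distrib]
    refine Finset.sum_congr rfl fun i hi => ?_
    have hik := Finset.mem_range.mp hi
    rw [Nat.cast_sub (by omega)]
    push_cast
    ring
  have eT : (∑ i ∈ Finset.range (k + 2), β i * (((i:ℝ) * ((i:ℝ) - 1) + 2 * lam * (i:ℝ)) * deriv^[i - 1] f x) * deriv^[k + 1 - i] g x)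
      = (∑ i ∈ Finset.range (k + 1), β (i + 1) * (((i:ℝ) + 1) * ((i:ℝ) + 2 * lam)) * deriv^[i] f x * deriv^[k - i] g x) := by
    rw [Finset.sum_range_succ']
    norm_num
    exact Finset.sum_congr rfl fun i _ => by
      simp only [Nat.add_sub_cancel, Nat.succ_sub_succ_eq_sub]
      push_cast
      ring
  have eT2 : (∑ i ∈ Finset.range (k + 2), β i * (((((k + 1 - i : ℕ)):ℝ) * ((((k + 1 - i : ℕ)):ℝ) - 1) + 2 * nu * (((k + 1 - i : ℕ)):ℝ)) * deriv^[k + 1 - i - 1] g x) * deriv^[i] f x)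
      = (∑ i ∈ Finset.range (k + 1), β i * (((k:ℝ) + 1 - (i:ℝ)) * ((k:ℝ) - (i:ℝ) + 2 * nu)) * deriv^[i] f x * deriv^[k - i] g x) := by
    rw [Finset.sum_range_succ]
    norm_num [Nat.sub_self]
    refine Finset.sum_congr rfl fun i hi => ?_
    have hik := Finset.mem_range.mp hi
    have h1 : k + 1 - i - 1 = k - i := by omega
    rw [h1, Nat.cast_sub (by omega : i ≤ k + 1)]
    push_cast
    ring
  have eR : (∑ i ∈ Finset.range (k + 1), (2 * (mu - lam - nu - (k : ℝ) - 1) * γ i + ((i : ℝ) + 1) * ((i : ℝ) + 2 * lam) * β (i + 1) + ((k : ℝ) + 1 - (i : ℝ)) * ((k : ℝ) - (i : ℝ) + 2 * nu) * β i) * deriv^[i] f x * deriv^[k - i] g x)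
      = 2 * (mu - lam - nu - (k:ℝ) - 1) * (∑ i ∈ Finset.range (k + 1), γ i * deriv^[i] f x * deriv^[k - i] g x) + (∑ i ∈ Finset.range (k + 1), β (i + 1) * (((i:ℝ) + 1) * ((i:ℝ) + 2 * lam)) * deriv^[i] f x * deriv^[k - i] g x) + (∑ i ∈ Finset.range (k + 1), β i * (((k:ℝ) + 1 - (i:ℝ)) * ((k:ℝ) - (i:ℝ) + 2 * nu)) * deriv^[i] f x * deriv^[k - i] g x) := by
    simp only [Finset.mul_sum, ← Finset.sum_add_distrib, ← Finset.sum_sub_distrib]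
    exact Finset.sum_congr rfl fun i _ => by ring
  linear_combination x * e1 + x * e2 + mu * e3 + mu * e4 - e5 - e6 - e7 - e8 - x ^ 2 * e9 - mu * (2 * x) * e10 + e11 + eT + e12 + eT2 - e3 - e4 - eR

private lemma itf (u : ℝ → ℝ) (i : ℕ) : deriv^[i] (deriv u) = deriv^[i+1] u :=
  (Function.iterate_succ_apply deriv i u).symm

private lemma cochain_one_fun (k : ℕ) (β γ : ℕ → ℝ) (f g : ℝ → ℝ) :
    cochain k β γ (fun _ => 1) f g = fun _ => 0 := by
  funext z; simp [cochain, d_one, d_c]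

private lemma cochain2y (k : ℕ) (β γ : ℕ → ℝ) (f g : ℝ → ℝ) (x : ℝ) :
    cochain k β γ (fun y => 2*y) f g x
      = ∑ i ∈ Finset.range (k+2), β i * 2 * deriv^[i] f x * deriv^[k+1-i] g x := by
  simp [cochain, d_2x, d_c]

set_option maxHeartbeats 1000000 in
private lemma caseB {k : ℕ} {lam nu mu : ℝ} {β γ : ℕ → ℝ} {f g : ℝ → ℝ}
    (hf : ContDiff ℝ (↑(⊤:ℕ∞)) f) (hg : ContDiff ℝ (↑(⊤:ℕ∞)) g) (x : ℝ) :
    Lop mu (fun _ => 1) (cochain k β γ (fun x => x) f g) x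
      - cochain k β γ (fun x => x) (Lop lam (fun _ => 1) f) g x
      - cochain k β γ (fun x => x) f (Lop nu (fun _ => 1) g) x = 0 := by
  have hid : ContDiff ℝ (↑(⊤:ℕ∞)) (fun x : ℝ => x) := contDiff_id
  have hDx := (cochain_hda (k := k) (β := β) (γ := γ) hid hf hg x).deriv
  rw [d_id, d_c, d_c] at hDx
  rw [lop_one mu, lop_one lam, lop_one nu, hDx]
  simp only [cochain, itf, d_id, d_c]
  simp only [mul_zero, zero_mul, add_zero, zero_add, mul_one, one_mul, Finset.sum_const_zero]
  have e : (∑ i ∈ Finset.range (k + 2), β i * (deriv^[i + 1] f x * deriv^[k + 1 - i] g x + deriv^[i] f x * deriv^[k + 1 - i + 1] g x))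
      = (∑ i ∈ Finset.range (k + 2), β i * deriv^[i + 1] f x * deriv^[k + 1 - i] g x)
        + (∑ i ∈ Finset.range (k + 2), β i * deriv^[i] f x * deriv^[k + 1 - i + 1] g x) := by
    simp only [← Finset.sum_add_distrib]
    exact Finset.sum_congr rfl fun i _ => by ring
  linear_combination e

set_option maxHeartbeats 1000000 in
private lemma caseC {k : ℕ} {lam nu mu : ℝ} {β γ : ℕ → ℝ} {f g : ℝ → ℝ}
    (hf : ContDiff ℝ (↑(⊤:ℕ∞)) f) (hg : ContDiff ℝ (↑(⊤:ℕ∞)) g) (x : ℝ) :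
    Lop mu (fun _ => 1) (cochain k β γ (fun x => x^2) f g) x
      - cochain k β γ (fun x => x^2) (Lop lam (fun _ => 1) f) g x
      - cochain k β γ (fun x => x^2) f (Lop nu (fun _ => 1) g) x
    = ∑ i ∈ Finset.range (k+2), β i * 2 * deriv^[i] f x * deriv^[k+1-i] g x := by
  have hsq : ContDiff ℝ (↑(⊤:ℕ∞)) (fun x : ℝ => x^2) := contDiff_id.pow 2
  have hD2 := (cochain_hda (k := k) (β := β) (γ := γ) hsq hf hg x).deriv
  rw [d_sq, d_2x, d_c] at hD2
  rw [lop_one mu, lop_one lam, lop_one nu, hD2]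
  simp only [cochain, itf, d_sq, d_2x, d_c]
  simp only [mul_zero, zero_mul, add_zero, zero_add, mul_one, one_mul, Finset.sum_const_zero]
  have e1 : (∑ i ∈ Finset.range (k + 2), β i * (2 * (deriv^[i] f x * deriv^[k + 1 - i] g x) + 2 * x * (deriv^[i + 1] f x * deriv^[k + 1 - i] g x + deriv^[i] f x * deriv^[k + 1 - i + 1] g x)))
      = (∑ i ∈ Finset.range (k + 2), β i * 2 * deriv^[i] f x * deriv^[k + 1 - i] g x)
        + (∑ i ∈ Finset.range (k + 2), β i * (2 * x) * deriv^[i + 1] f x * deriv^[k + 1 - i] g x)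
        + (∑ i ∈ Finset.range (k + 2), β i * (2 * x) * deriv^[i] f x * deriv^[k + 1 - i + 1] g x) := by
    simp only [← Finset.sum_add_distrib]
    exact Finset.sum_congr rfl fun i _ => by ring
  have e2 : (∑ i ∈ Finset.range (k + 1), γ i * (2 * (deriv^[i + 1] f x * deriv^[k - i] g x + deriv^[i] f x * deriv^[k - i + 1] g x)))
      = (∑ i ∈ Finset.range (k + 1), γ i * 2 * deriv^[i + 1] f x * deriv^[k - i] g x)
        + (∑ i ∈ Finset.range (k + 1), γ i * 2 * deriv^[i] f x * deriv^[k - i + 1] g x) := by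
    simp only [← Finset.sum_add_distrib]
    exact Finset.sum_congr rfl fun i _ => by ring
  linear_combination e1 + e2

private lemma d_msq : deriv (fun y : ℝ => -y^2) = fun y => -(2*y) := by
  funext y; simp

private lemma d_mneg2x : deriv (fun y : ℝ => -(2*y)) = fun _ => -2 := by
  funext y
  have h := (((hasDerivAt_id' y).const_mul (2:ℝ)).neg).deriv
  simpa using h

private lemma cochain_neg_sq (k : ℕ) (β γ : ℕ → ℝ) (f g : ℝ → ℝ) (x : ℝ) :
    cochain k β γ (fun y => -y^2) f g x = - cochain k β γ (fun y => y^2) f g x := by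
  simp only [cochain, d_msq, d_mneg2x, d_sq, d_2x, d_c]
  rw [neg_add, ← Finset.sum_neg_distrib, ← Finset.sum_neg_distrib]
  exact congrArg₂ (· + ·) (Finset.sum_congr rfl fun i _ => by ring)
    (Finset.sum_congr rfl fun i _ => by ring)

private lemma cochain_neg2y (k : ℕ) (β γ : ℕ → ℝ) (f g : ℝ → ℝ) (x : ℝ) :
    cochain k β γ (fun y => -(2*y)) f g x = - cochain k β γ (fun y => 2*y) f g x := by
  simp only [cochain, d_mneg2x, d_2x, d_c]
  rw [neg_add, ← Finset.sum_neg_distrib, ← Finset.sum_neg_distrib]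
  exact congrArg₂ (· + ·) (Finset.sum_congr rfl fun i _ => by ring)
    (Finset.sum_congr rfl fun i _ => by ring)

private lemma iterMon (j : ℕ) : ∀ a, deriv^[a] (fun y : ℝ => y^j)
    = fun y => (j.descFactorial a : ℝ) * y^(j-a) := by
  intro a
  induction a with
  | zero => funext y; simp
  | succ a ih =>
    rw [Function.iterate_succ_apply', ih]
    funext y
    have h1 := ((hasDerivAt_pow (j-a) y).const_mul ((j.descFactorial a : ℝ))).deriv
    rw [h1, Nat.descFactorial_succ, ← Nat.sub_sub]
    push_cast
    ring

private lemma cochain_const_fun (k : ℕ) (β γ : ℕ → ℝ) (c : ℝ) (f g : ℝ → ℝ) :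
    cochain k β γ (fun _ => c) f g = fun _ => 0 := by
  funext z; simp [cochain, d_c]

private lemma cochain_const_pt (k : ℕ) (β γ : ℕ → ℝ) (c : ℝ) (f g : ℝ → ℝ) (x : ℝ) :
    cochain k β γ (fun _ => c) f g x = 0 := by
  simp [cochain, d_c]

set_option maxHeartbeats 1000000 in
/-- Lemma on the general form of homogeneous 1-cocycles of `sl(2)` with values in
`D_{λ,ν;μ}`: the cochain `c` satisfies the 1-cocycle condition
`c([X_{h₁},X_{h₂}],f,g) = X_{h₁}·c(X_{h₂},f,g) − X_{h₂}·c(X_{h₁},f,g)` for all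
`h₁, h₂ ∈ {1, x, x²}` if and only if
`2(μ−λ−ν−k−1)γ_i + (i+1)(i+2λ)β_{i+1} + (k+1−i)(k−i+2ν)β_i = 0` for `0 ≤ i ≤ k`. -/
theorem stmt_5 (k : ℕ) (lam nu mu : ℝ) (β γ : ℕ → ℝ) :
    (∀ h₁ ∈ ({fun _ => 1, fun x => x, fun x => x ^ 2} : Set (ℝ → ℝ)),
      ∀ h₂ ∈ ({fun _ => 1, fun x => x, fun x => x ^ 2} : Set (ℝ → ℝ)),
      ∀ f g : ℝ → ℝ, ContDiff ℝ (⊤ : ℕ∞) f → ContDiff ℝ (⊤ : ℕ∞) g → ∀ x : ℝ,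
        cochain k β γ (fun y => h₁ y * deriv h₂ y - deriv h₁ y * h₂ y) f g x =
          (Lop mu h₁ (cochain k β γ h₂ f g) x
            - cochain k β γ h₂ (Lop lam h₁ f) g x
            - cochain k β γ h₂ f (Lop nu h₁ g) x)
          - (Lop mu h₂ (cochain k β γ h₁ f g) x
            - cochain k β γ h₁ (Lop lam h₂ f) g x
            - cochain k β γ h₁ f (Lop nu h₂ g) x)) ↔
    (∀ i : ℕ, i ≤ k →
      2 * (mu - lam - nu - (k : ℝ) - 1) * γ i
        + ((i : ℝ) + 1) * ((i : ℝ) + 2 * lam) * β (i + 1)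
        + ((k : ℝ) + 1 - (i : ℝ)) * ((k : ℝ) - (i : ℝ) + 2 * nu) * β i = 0) := by
  have hxmem : (fun x : ℝ => x) ∈ ({fun _ => 1, fun x => x, fun x => x ^ 2} : Set (ℝ → ℝ)) :=
    Set.mem_insert_iff.mpr (Or.inr (Set.mem_insert_iff.mpr (Or.inl rfl)))
  have hx2mem : (fun x : ℝ => x ^ 2) ∈ ({fun _ => 1, fun x => x, fun x => x ^ 2} : Set (ℝ → ℝ)) :=
    Set.mem_insert_iff.mpr (Or.inr (Set.mem_insert_iff.mpr (Or.inr rfl)))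
  have hb12 : (fun y => (fun x : ℝ => x) y * deriv (fun x : ℝ => x ^ 2) y
      - deriv (fun x : ℝ => x) y * (fun x : ℝ => x ^ 2) y) = fun y : ℝ => y ^ 2 := by
    funext y; simp [d_sq, d_id]; ring
  constructor
  · -- forward direction
    intro hco i hik
    have hfm : ContDiff ℝ (⊤ : ℕ∞) (fun y : ℝ => y ^ i) := contDiff_id.pow i
    have hgm : ContDiff ℝ (⊤ : ℕ∞) (fun y : ℝ => y ^ (k - i)) := contDiff_id.pow (k - i)
    have H := hco _ hxmem _ hx2mem (fun y => y ^ i) (fun y => y ^ (k - i)) hfm hgm 0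
    rw [hb12] at H
    have hm := main_case (k := k) (lam := lam) (nu := nu) (mu := mu) (β := β) (γ := γ)
      (hfm.of_le (by simp)) (hgm.of_le (by simp)) 0
    have hz : (∑ j ∈ Finset.range (k + 1),
        (2 * (mu - lam - nu - (k : ℝ) - 1) * γ j
          + ((j : ℝ) + 1) * ((j : ℝ) + 2 * lam) * β (j + 1)
          + ((k : ℝ) + 1 - (j : ℝ)) * ((k : ℝ) - (j : ℝ) + 2 * nu) * β j)
        * deriv^[j] (fun y : ℝ => y ^ i) 0 * deriv^[k - j] (fun y : ℝ => y ^ (k - i)) 0) = 0 := by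
      linear_combination -hm - H
    simp only [iterMon] at hz
    rw [Finset.sum_eq_single_of_mem i (Finset.mem_range.mpr (by omega))
      (fun b _ hb => by
        rcases lt_or_gt_of_ne hb with h | h
        · simp [zero_pow (show i - b ≠ 0 by omega)]
        · simp [Nat.descFactorial_eq_zero_iff_lt.mpr h])] at hz
    have hA : ((i.descFactorial i : ℝ) * (0:ℝ) ^ (i - i)) ≠ 0 := by
      simp [Nat.sub_self, Nat.descFactorial_self, Nat.factorial_ne_zero]
    have hB : (((k - i).descFactorial (k - i) : ℝ) * (0:ℝ) ^ (k - i - (k - i))) ≠ 0 := by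
      simp [Nat.sub_self, Nat.descFactorial_self, Nat.factorial_ne_zero]
    exact (mul_eq_zero.mp ((mul_eq_zero.mp hz).resolve_right hB)).resolve_right hA
  · -- backward direction
    intro hco h₁ hm1 h₂ hm2 f g hf' hg' x
    have hf : ContDiff ℝ (↑(⊤:ℕ∞)) f := hf'.of_le (by simp)
    have hg : ContDiff ℝ (↑(⊤:ℕ∞)) g := hg'.of_le (by simp)
    have hS : ∀ x' : ℝ, (∑ i ∈ Finset.range (k + 1),
        (2 * (mu - lam - nu - (k : ℝ) - 1) * γ i
          + ((i : ℝ) + 1) * ((i : ℝ) + 2 * lam) * β (i + 1)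
          + ((k : ℝ) + 1 - (i : ℝ)) * ((k : ℝ) - (i : ℝ) + 2 * nu) * β i)
        * deriv^[i] f x' * deriv^[k - i] g x') = 0 := fun x' =>
      Finset.sum_eq_zero fun i hi => by
        have hik : i ≤ k := by have := Finset.mem_range.mp hi; omega
        rw [hco i hik, zero_mul, zero_mul]
    simp only [Set.mem_insert_iff, Set.mem_singleton_iff] at hm1 hm2
    rcases hm1 with rfl | rfl | rfl <;> rcases hm2 with rfl | rfl | rfl
    · -- (1,1)
      have hb : (fun y => (fun _ : ℝ => (1:ℝ)) y * deriv (fun _ : ℝ => (1:ℝ)) y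
          - deriv (fun _ : ℝ => (1:ℝ)) y * (fun _ : ℝ => (1:ℝ)) y) = fun _ : ℝ => (0:ℝ) := by
        funext y; simp
      rw [hb, sub_self]
      exact cochain_const_pt k β γ 0 f g x
    · -- (1,x)
      have hb : (fun y => (fun _ : ℝ => (1:ℝ)) y * deriv (fun x : ℝ => x) y
          - deriv (fun _ : ℝ => (1:ℝ)) y * (fun x : ℝ => x) y) = fun _ : ℝ => (1:ℝ) := by
        funext y; simp
      rw [hb, cochain_const_pt k β γ 1 f g x]
      have hQ : Lop mu (fun x : ℝ => x) (cochain k β γ (fun _ => 1) f g) x = 0 := by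
        rw [cochain_const_fun k β γ 1 f g]; simp [Lop, d_c]
      rw [hQ, cochain_const_pt k β γ 1 (Lop lam (fun x => x) f) g x,
        cochain_const_pt k β γ 1 f (Lop nu (fun x => x) g) x]
      linear_combination -(caseB (k := k) (lam := lam) (nu := nu) (mu := mu) (β := β) (γ := γ) hf hg x)
    · -- (1,x²)
      have hb : (fun y => (fun _ : ℝ => (1:ℝ)) y * deriv (fun x : ℝ => x ^ 2) y
          - deriv (fun _ : ℝ => (1:ℝ)) y * (fun x : ℝ => x ^ 2) y) = fun y : ℝ => 2 * y := by
        funext y; simp [d_sq]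
      rw [hb, cochain2y]
      have hQ : Lop mu (fun x : ℝ => x ^ 2) (cochain k β γ (fun _ => 1) f g) x = 0 := by
        rw [cochain_const_fun k β γ 1 f g]; simp [Lop, d_c]
      rw [hQ, cochain_const_pt k β γ 1 (Lop lam (fun x => x ^ 2) f) g x,
        cochain_const_pt k β γ 1 f (Lop nu (fun x => x ^ 2) g) x]
      linear_combination -(caseC (k := k) (lam := lam) (nu := nu) (mu := mu) (β := β) (γ := γ) hf hg x)
    · -- (x,1)
      have hb : (fun y => (fun x : ℝ => x) y * deriv (fun _ : ℝ => (1:ℝ)) y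
          - deriv (fun x : ℝ => x) y * (fun _ : ℝ => (1:ℝ)) y) = fun _ : ℝ => (-1:ℝ) := by
        funext y; simp
      rw [hb, cochain_const_pt k β γ (-1) f g x]
      have hQ : Lop mu (fun x : ℝ => x) (cochain k β γ (fun _ => 1) f g) x = 0 := by
        rw [cochain_const_fun k β γ 1 f g]; simp [Lop, d_c]
      rw [hQ, cochain_const_pt k β γ 1 (Lop lam (fun x => x) f) g x,
        cochain_const_pt k β γ 1 f (Lop nu (fun x => x) g) x]
      linear_combination caseB (k := k) (lam := lam) (nu := nu) (mu := mu) (β := β) (γ := γ) hf hg x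
    · -- (x,x)
      have hb : (fun y => (fun x : ℝ => x) y * deriv (fun x : ℝ => x) y
          - deriv (fun x : ℝ => x) y * (fun x : ℝ => x) y) = fun _ : ℝ => (0:ℝ) := by
        funext y; simp
      rw [hb, sub_self]
      exact cochain_const_pt k β γ 0 f g x
    · -- (x,x²)
      rw [hb12]
      linear_combination -(main_case (k := k) (lam := lam) (nu := nu) (mu := mu) (β := β) (γ := γ) hf hg x) - hS x
    · -- (x²,1)
      have hb : (fun y => (fun x : ℝ => x ^ 2) y * deriv (fun _ : ℝ => (1:ℝ)) y
          - deriv (fun x : ℝ => x ^ 2) y * (fun _ : ℝ => (1:ℝ)) y) = fun y : ℝ => -(2 * y) := by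
        funext y; simp [d_sq]
      rw [hb, cochain_neg2y, cochain2y]
      have hQ : Lop mu (fun x : ℝ => x ^ 2) (cochain k β γ (fun _ => 1) f g) x = 0 := by
        rw [cochain_const_fun k β γ 1 f g]; simp [Lop, d_c]
      rw [hQ, cochain_const_pt k β γ 1 (Lop lam (fun x => x ^ 2) f) g x,
        cochain_const_pt k β γ 1 f (Lop nu (fun x => x ^ 2) g) x]
      linear_combination caseC (k := k) (lam := lam) (nu := nu) (mu := mu) (β := β) (γ := γ) hf hg x
    · -- (x²,x)
      have hb : (fun y => (fun x : ℝ => x ^ 2) y * deriv (fun x : ℝ => x) y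
          - deriv (fun x : ℝ => x ^ 2) y * (fun x : ℝ => x) y) = fun y : ℝ => -y ^ 2 := by
        funext y; simp [d_sq, d_id]; ring
      rw [hb, cochain_neg_sq]
      linear_combination main_case (k := k) (lam := lam) (nu := nu) (mu := mu) (β := β) (γ := γ) hf hg x + hS x
    · -- (x²,x²)
      have hb : (fun y => (fun x : ℝ => x ^ 2) y * deriv (fun x : ℝ => x ^ 2) y
          - deriv (fun x : ℝ => x ^ 2) y * (fun x : ℝ => x ^ 2) y) = fun _ : ℝ => (0:ℝ) := by
        funext y; simp [d_sq]; ring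
      rw [hb, sub_self]
      exact cochain_const_pt k β γ 0 f g x
end

section
/- If μ − λ − ν ≠ k+1, then any 1-cocycle of sl(2) with values in D_{λ,ν;μ} of the form c(X_h,f,g) = Σ_{i=0}^{k+1} β_i h' f^{(i)} g^{(k+1−i)} + Σ_{i=0}^{k} γ_i h'' f^{(i)} g^{(k−i)} (with constants satisfying 2(μ−λ−ν−k−1)γ_i + (i+1)(i+2λ)β_{i+1} + (k+1−i)(k−i+2ν)β_i = 0) is the coboundary of b(f,g) = (1/(μ−λ−ν−k−1))·Σ_{i=0}^{k+1} β_i f^{(i)} g^{(k+1−i)}. -/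
/-- The bilinear operator `b(f,g) = (1/(μ−λ−ν−k−1))·Σ_{i=0}^{k+1} β_i f^{(i)} g^{(k+1−i)}`. -/
noncomputable def Bop (k : ℕ) (r : ℝ) (β : ℕ → ℝ) (f g : ℝ → ℝ) : ℝ → ℝ :=
  fun x => r * ∑ i ∈ Finset.range (k + 2), β i * deriv^[i] f x * deriv^[k + 1 - i] g x

open scoped ContDiff
open Finset

lemma diffIter {f : ℝ → ℝ} (hf : ContDiff ℝ (⊤ : ℕ∞) f) (n : ℕ) :
    Differentiable ℝ (deriv^[n] f) :=
  ((hf.of_le (by simp) : ContDiff ℝ ∞ f).iterate_deriv n).differentiable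
    (by simp)

lemma derivIter {f : ℝ → ℝ} (n : ℕ) (x : ℝ) :
    deriv (deriv^[n] f) x = deriv^[n + 1] f x := by
  rw [Function.iterate_succ_apply']

lemma deriv_comb2 {A B : ℝ → ℝ} {x : ℝ} (hA : DifferentiableAt ℝ A x)
    (hB : DifferentiableAt ℝ B x) (c : ℝ) :
    deriv (fun y => y * A y + c * B y) x = A x + x * deriv A x + c * deriv B x := by
  have h1 : HasDerivAt (fun y : ℝ => y * A y + c * B y)
      (1 * A x + x * deriv A x + c * deriv B x) x :=
    ((hasDerivAt_id x).mul hA.hasDerivAt).add (hB.hasDerivAt.const_mul c)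
  rw [h1.deriv]; ring

lemma deriv_comb3 {A B C : ℝ → ℝ} {x : ℝ} (hA : DifferentiableAt ℝ A x)
    (hB : DifferentiableAt ℝ B x) (hC : DifferentiableAt ℝ C x) (b c : ℝ) :
    deriv (fun y => y ^ 2 * A y + b * (y * B y) + c * C y) x
      = 2 * x * A x + x ^ 2 * deriv A x + b * B x + b * (x * deriv B x) + c * deriv C x := by
  have h1 : HasDerivAt (fun y : ℝ => y ^ 2 * A y + b * (y * B y) + c * C y)
      (((2:ℕ) * x ^ 1 * A x + x ^ 2 * deriv A x) + b * (1 * B x + x * deriv B x)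
        + c * deriv C x) x :=
    (((hasDerivAt_pow 2 x).mul hA.hasDerivAt).add
      (((hasDerivAt_id x).mul hB.hasDerivAt).const_mul b)).add (hC.hasDerivAt.const_mul c)
  rw [h1.deriv]; push_cast; ring

lemma deriv_Bop {f g : ℝ → ℝ} (hf : ContDiff ℝ (⊤ : ℕ∞) f) (hg : ContDiff ℝ (⊤ : ℕ∞) g)
    (k : ℕ) (r : ℝ) (β : ℕ → ℝ) (x : ℝ) :
    deriv (Bop k r β f g) x =
      r * ∑ i ∈ Finset.range (k + 2), β i *
        (deriv^[i + 1] f x * deriv^[k + 1 - i] g x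
          + deriv^[i] f x * deriv^[k + 1 - i + 1] g x) := by
  have hterm : ∀ i, DifferentiableAt ℝ
      (fun y => β i * deriv^[i] f y * deriv^[k + 1 - i] g y) x := fun i =>
    (((diffIter hf i) x).const_mul (β i)).mul ((diffIter hg (k + 1 - i)) x)
  have hsum : DifferentiableAt ℝ
      (fun y => ∑ i ∈ Finset.range (k + 2),
        β i * deriv^[i] f y * deriv^[k + 1 - i] g y) x :=
    DifferentiableAt.fun_sum fun i _ => hterm i
  unfold Bop
  rw [deriv_const_mul _ hsum]
  congr 1
  rw [deriv_fun_sum fun i _ => hterm i]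
  refine Finset.sum_congr rfl fun i _ => ?_
  rw [deriv_fun_mul (((diffIter hf i) x).const_mul (β i)) ((diffIter hg (k + 1 - i)) x),
    deriv_const_mul _ ((diffIter hf i) x), derivIter, derivIter]
  ring

lemma iterLop_id {f : ℝ → ℝ} (hf : ContDiff ℝ (⊤ : ℕ∞) f) (lam : ℝ) :
    ∀ (n : ℕ) (x : ℝ), deriv^[n] (Lop lam (fun y => y) f) x
      = x * deriv^[n + 1] f x + ((n : ℝ) + lam) * deriv^[n] f x := by
  intro n
  induction n with
  | zero =>
    intro x
    simp [Lop, deriv_id'']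
  | succ n ih =>
    intro x
    have hfun : deriv^[n] (Lop lam (fun y => y) f)
        = fun y => y * deriv^[n + 1] f y + ((n : ℝ) + lam) * deriv^[n] f y := funext ih
    rw [Function.iterate_succ_apply', hfun,
      deriv_comb2 ((diffIter hf (n + 1)) x) ((diffIter hf n) x), derivIter, derivIter]
    push_cast
    ring

lemma iterLop_sq {f : ℝ → ℝ} (hf : ContDiff ℝ (⊤ : ℕ∞) f) (lam : ℝ) :
    ∀ (n : ℕ) (x : ℝ), deriv^[n] (Lop lam (fun y => y ^ 2) f) x
      = x ^ 2 * deriv^[n + 1] f x + 2 * ((n : ℝ) + lam) * (x * deriv^[n] f x)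
        + (n : ℝ) * ((n : ℝ) - 1 + 2 * lam) * deriv^[n - 1] f x := by
  intro n
  induction n with
  | zero =>
    intro x
    have : deriv (fun y : ℝ => y ^ 2) x = 2 * x := by
      rw [(hasDerivAt_pow 2 x).deriv]; push_cast; ring
    simp [Lop, this]
    ring
  | succ n ih =>
    intro x
    have hfun : deriv^[n] (Lop lam (fun y => y ^ 2) f)
        = fun y => y ^ 2 * deriv^[n + 1] f y + 2 * ((n : ℝ) + lam) * (y * deriv^[n] f y)
            + (n : ℝ) * ((n : ℝ) - 1 + 2 * lam) * deriv^[n - 1] f y := funext ih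
    rw [Function.iterate_succ_apply', hfun,
      deriv_comb3 ((diffIter hf (n + 1)) x) ((diffIter hf n) x) ((diffIter hf (n - 1)) x),
      derivIter, derivIter, derivIter]
    rcases n with _ | m
    · push_cast; ring
    · have : m + 1 - 1 + 1 = m + 1 := rfl
      rw [this]
      push_cast
      ring

lemma case_one (k : ℕ) (lam nu mu r : ℝ) (β γ : ℕ → ℝ)
    (f g : ℝ → ℝ) (hf : ContDiff ℝ (⊤ : ℕ∞) f) (hg : ContDiff ℝ (⊤ : ℕ∞) g) (x : ℝ) :
    cochain k β γ (fun _ => 1) f g x =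
      Lop mu (fun _ => 1) (Bop k r β f g) x
        - Bop k r β (Lop lam (fun _ => 1) f) g x
        - Bop k r β f (Lop nu (fun _ => 1) g) x := by
  have hL : ∀ (c : ℝ) (u : ℝ → ℝ), Lop c (fun _ : ℝ => (1 : ℝ)) u = deriv u := by
    intro c u; funext y; simp [Lop]
  have hc : cochain k β γ (fun _ => 1) f g x = 0 := by simp [cochain]
  rw [hc, hL, hL, hL, deriv_Bop hf hg]
  have e1 : Bop k r β (deriv f) g x
      = r * ∑ i ∈ range (k + 2), β i * deriv^[i + 1] f x * deriv^[k + 1 - i] g x := by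
    unfold Bop
    congr 1
  have e2 : Bop k r β f (deriv g) x
      = r * ∑ i ∈ range (k + 2), β i * deriv^[i] f x * deriv^[k + 1 - i + 1] g x := by
    unfold Bop
    congr 1
  rw [e1, e2]
  have e3 : (∑ i ∈ range (k + 2), β i *
        (deriv^[i + 1] f x * deriv^[k + 1 - i] g x
          + deriv^[i] f x * deriv^[k + 1 - i + 1] g x))
      = (∑ i ∈ range (k + 2), β i * deriv^[i + 1] f x * deriv^[k + 1 - i] g x)
        + ∑ i ∈ range (k + 2), β i * deriv^[i] f x * deriv^[k + 1 - i + 1] g x := by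
    rw [← sum_add_distrib]
    exact sum_congr rfl fun i _ => by ring
  rw [e3]
  ring

lemma case_id (k : ℕ) (lam nu mu r : ℝ) (β γ : ℕ → ℝ)
    (hrs : r * (mu - lam - nu - (k : ℝ) - 1) = 1)
    (f g : ℝ → ℝ) (hf : ContDiff ℝ (⊤ : ℕ∞) f) (hg : ContDiff ℝ (⊤ : ℕ∞) g) (x : ℝ) :
    cochain k β γ (fun y => y) f g x =
      Lop mu (fun y => y) (Bop k r β f g) x
        - Bop k r β (Lop lam (fun y => y) f) g x
        - Bop k r β f (Lop nu (fun y => y) g) x := by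
  have hc : cochain k β γ (fun y => y) f g x
      = ∑ i ∈ range (k + 2), β i * deriv^[i] f x * deriv^[k + 1 - i] g x := by
    simp [cochain, deriv_id'']
  have hLB : Lop mu (fun y => y) (Bop k r β f g) x
      = x * deriv (Bop k r β f g) x + mu * Bop k r β f g x := by
    simp [Lop, deriv_id'']
  have e1 : Bop k r β (Lop lam (fun y => y) f) g x
      = r * ∑ i ∈ range (k + 2),
          β i * (x * deriv^[i + 1] f x + ((i : ℝ) + lam) * deriv^[i] f x)
            * deriv^[k + 1 - i] g x := by
    unfold Bop
    congr 1
    exact sum_congr rfl fun i _ => by rw [iterLop_id hf lam i x]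
  have e2 : Bop k r β f (Lop nu (fun y => y) g) x
      = r * ∑ i ∈ range (k + 2),
          β i * deriv^[i] f x * (x * deriv^[k + 1 - i + 1] g x
            + ((k : ℝ) + 1 - (i : ℝ) + nu) * deriv^[k + 1 - i] g x) := by
    unfold Bop
    congr 1
    refine sum_congr rfl fun i hi => ?_
    rw [iterLop_id hg nu (k + 1 - i) x]
    have hi' : i ≤ k + 1 := by have := mem_range.mp hi; omega
    have : ((k + 1 - i : ℕ) : ℝ) = (k : ℝ) + 1 - (i : ℝ) := by
      push_cast [Nat.cast_sub hi']; ring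
    rw [this]
  rw [hc, hLB, deriv_Bop hf hg, e1, e2]
  have key : x * (∑ i ∈ range (k + 2), β i *
        (deriv^[i + 1] f x * deriv^[k + 1 - i] g x
          + deriv^[i] f x * deriv^[k + 1 - i + 1] g x))
      + mu * (∑ i ∈ range (k + 2), β i * deriv^[i] f x * deriv^[k + 1 - i] g x)
      - (∑ i ∈ range (k + 2),
          β i * (x * deriv^[i + 1] f x + ((i : ℝ) + lam) * deriv^[i] f x)
            * deriv^[k + 1 - i] g x)
      - (∑ i ∈ range (k + 2),
          β i * deriv^[i] f x * (x * deriv^[k + 1 - i + 1] g x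
            + ((k : ℝ) + 1 - (i : ℝ) + nu) * deriv^[k + 1 - i] g x))
      = (mu - lam - nu - (k : ℝ) - 1)
          * ∑ i ∈ range (k + 2), β i * deriv^[i] f x * deriv^[k + 1 - i] g x := by
    rw [mul_sum, mul_sum, mul_sum, ← sum_add_distrib, ← sum_sub_distrib, ← sum_sub_distrib]
    exact sum_congr rfl fun i _ => by ring
  set S0 := ∑ i ∈ range (k + 2), β i * deriv^[i] f x * deriv^[k + 1 - i] g x with hS0
  calc S0 = (r * (mu - lam - nu - (k : ℝ) - 1)) * S0 := by rw [hrs, one_mul]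
    _ = _ := by rw [mul_assoc, ← key]; unfold Bop; rw [← hS0]; ring

lemma case_sq (k : ℕ) (lam nu mu r : ℝ) (β γ : ℕ → ℝ)
    (hrs : r * (mu - lam - nu - (k : ℝ) - 1) = 1)
    (hrel : ∀ i : ℕ, i ≤ k →
      2 * (mu - lam - nu - (k : ℝ) - 1) * γ i
        + ((i : ℝ) + 1) * ((i : ℝ) + 2 * lam) * β (i + 1)
        + ((k : ℝ) + 1 - (i : ℝ)) * ((k : ℝ) - (i : ℝ) + 2 * nu) * β i = 0)
    (f g : ℝ → ℝ) (hf : ContDiff ℝ (⊤ : ℕ∞) f) (hg : ContDiff ℝ (⊤ : ℕ∞) g) (x : ℝ) :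
    cochain k β γ (fun y => y ^ 2) f g x =
      Lop mu (fun y => y ^ 2) (Bop k r β f g) x
        - Bop k r β (Lop lam (fun y => y ^ 2) f) g x
        - Bop k r β f (Lop nu (fun y => y ^ 2) g) x := by
  have hd : deriv (fun y : ℝ => y ^ 2) = fun y => 2 * y :=
    funext fun y => by rw [(hasDerivAt_pow 2 y).deriv]; push_cast; ring
  have hdd : ∀ y : ℝ, deriv (fun y : ℝ => 2 * y) y = 2 := fun y => by
    have h := (hasDerivAt_id y).const_mul (2 : ℝ)
    simpa using h.deriv
  set s := mu - lam - nu - (k : ℝ) - 1 with hs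
  set S0β := ∑ i ∈ range (k + 2), β i * deriv^[i] f x * deriv^[k + 1 - i] g x with hS0β
  set S0γ := ∑ i ∈ range (k + 1), γ i * deriv^[i] f x * deriv^[k - i] g x with hS0γ
  have hc : cochain k β γ (fun y => y ^ 2) f g x = 2 * x * S0β + 2 * S0γ := by
    rw [cochain, hd, hdd x, hS0β, hS0γ, mul_sum, mul_sum]
    congr 1
    · exact sum_congr rfl fun i _ => by ring
    · exact sum_congr rfl fun i _ => by ring
  have hLB : Lop mu (fun y => y ^ 2) (Bop k r β f g) x
      = x ^ 2 * deriv (Bop k r β f g) x + mu * (2 * x) * Bop k r β f g x := by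
    rw [Lop, hd]
  have e1 : Bop k r β (Lop lam (fun y => y ^ 2) f) g x
      = r * ∑ i ∈ range (k + 2),
          β i * (x ^ 2 * deriv^[i + 1] f x + 2 * ((i : ℝ) + lam) * (x * deriv^[i] f x)
            + (i : ℝ) * ((i : ℝ) - 1 + 2 * lam) * deriv^[i - 1] f x)
            * deriv^[k + 1 - i] g x := by
    rw [Bop]
    congr 1
    exact sum_congr rfl fun i _ => by rw [iterLop_sq hf lam i x]
  have e2 : Bop k r β f (Lop nu (fun y => y ^ 2) g) x
      = r * ∑ i ∈ range (k + 2),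
          β i * deriv^[i] f x * (x ^ 2 * deriv^[k + 1 - i + 1] g x
            + 2 * ((k : ℝ) + 1 - (i : ℝ) + nu) * (x * deriv^[k + 1 - i] g x)
            + ((k : ℝ) + 1 - (i : ℝ)) * ((k : ℝ) - (i : ℝ) + 2 * nu) * deriv^[k - i] g x) := by
    rw [Bop]
    congr 1
    refine sum_congr rfl fun i hi => ?_
    have hi' : i ≤ k + 1 := by have := mem_range.mp hi; omega
    rw [iterLop_sq hg nu (k + 1 - i) x]
    have h1 : k + 1 - i - 1 = k - i := by omega
    have h2 : ((k + 1 - i : ℕ) : ℝ) = (k : ℝ) + 1 - (i : ℝ) := by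
      rw [Nat.cast_sub hi']; push_cast; ring
    rw [h1, h2]
    ring
  -- the P sum (shifted f-index terms)
  have hP : (∑ i ∈ range (k + 2),
        (i : ℝ) * (((i : ℝ) - 1 + 2 * lam)
          * (β i * (deriv^[i - 1] f x * deriv^[k + 1 - i] g x))))
      = ∑ i ∈ range (k + 1),
          ((i : ℝ) + 1) * (((i : ℝ) + 2 * lam)
            * (β (i + 1) * (deriv^[i] f x * deriv^[k - i] g x))) := by
    rw [sum_range_succ']
    simp only [Nat.cast_zero, zero_mul, add_zero]
    refine sum_congr rfl fun i _ => ?_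
    have h1 : i + 1 - 1 = i := rfl
    have h2 : k + 1 - (i + 1) = k - i := by omega
    rw [h1, h2]
    push_cast
    ring
  have hQ : (∑ i ∈ range (k + 2),
        ((k : ℝ) + 1 - (i : ℝ)) * (((k : ℝ) - (i : ℝ) + 2 * nu)
          * (β i * (deriv^[i] f x * deriv^[k - i] g x))))
      = ∑ i ∈ range (k + 1),
          ((k : ℝ) + 1 - (i : ℝ)) * (((k : ℝ) - (i : ℝ) + 2 * nu)
            * (β i * (deriv^[i] f x * deriv^[k - i] g x))) := by
    rw [sum_range_succ]
    have h0 : ((k : ℝ) + 1 - ((k + 1 : ℕ) : ℝ)) * (((k : ℝ) - ((k + 1 : ℕ) : ℝ) + 2 * nu)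
        * (β (k + 1) * (deriv^[k + 1] f x * deriv^[k - (k + 1)] g x))) = 0 := by
      push_cast; ring
    rw [h0, add_zero]
  have hPQ : (∑ i ∈ range (k + 1),
        ((i : ℝ) + 1) * (((i : ℝ) + 2 * lam)
          * (β (i + 1) * (deriv^[i] f x * deriv^[k - i] g x))))
      + (∑ i ∈ range (k + 1),
          ((k : ℝ) + 1 - (i : ℝ)) * (((k : ℝ) - (i : ℝ) + 2 * nu)
            * (β i * (deriv^[i] f x * deriv^[k - i] g x))))
      = -(2 * s) * S0γ := by
    rw [hS0γ, ← sum_add_distrib, mul_sum]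
    refine sum_congr rfl fun i hi => ?_
    have hik : i ≤ k := by have := mem_range.mp hi; omega
    have h := hrel i hik
    linear_combination (deriv^[i] f x * deriv^[k - i] g x) * h
  have key : x ^ 2 * (∑ i ∈ range (k + 2), β i *
        (deriv^[i + 1] f x * deriv^[k + 1 - i] g x
          + deriv^[i] f x * deriv^[k + 1 - i + 1] g x))
      + mu * (2 * x) * S0β
      - (∑ i ∈ range (k + 2),
          β i * (x ^ 2 * deriv^[i + 1] f x + 2 * ((i : ℝ) + lam) * (x * deriv^[i] f x)
            + (i : ℝ) * ((i : ℝ) - 1 + 2 * lam) * deriv^[i - 1] f x)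
            * deriv^[k + 1 - i] g x)
      - (∑ i ∈ range (k + 2),
          β i * deriv^[i] f x * (x ^ 2 * deriv^[k + 1 - i + 1] g x
            + 2 * ((k : ℝ) + 1 - (i : ℝ) + nu) * (x * deriv^[k + 1 - i] g x)
            + ((k : ℝ) + 1 - (i : ℝ)) * ((k : ℝ) - (i : ℝ) + 2 * nu) * deriv^[k - i] g x))
      = s * (2 * x * S0β + 2 * S0γ) := by
    have expand : ∀ i ∈ range (k + 2),
        x ^ 2 * (β i * (deriv^[i + 1] f x * deriv^[k + 1 - i] g x
            + deriv^[i] f x * deriv^[k + 1 - i + 1] g x))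
          + mu * (2 * x) * (β i * deriv^[i] f x * deriv^[k + 1 - i] g x)
          - β i * (x ^ 2 * deriv^[i + 1] f x + 2 * ((i : ℝ) + lam) * (x * deriv^[i] f x)
              + (i : ℝ) * ((i : ℝ) - 1 + 2 * lam) * deriv^[i - 1] f x)
              * deriv^[k + 1 - i] g x
          - β i * deriv^[i] f x * (x ^ 2 * deriv^[k + 1 - i + 1] g x
              + 2 * ((k : ℝ) + 1 - (i : ℝ) + nu) * (x * deriv^[k + 1 - i] g x)
              + ((k : ℝ) + 1 - (i : ℝ)) * ((k : ℝ) - (i : ℝ) + 2 * nu) * deriv^[k - i] g x)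
        = 2 * x * s * (β i * deriv^[i] f x * deriv^[k + 1 - i] g x)
          - (i : ℝ) * (((i : ℝ) - 1 + 2 * lam)
              * (β i * (deriv^[i - 1] f x * deriv^[k + 1 - i] g x)))
          - ((k : ℝ) + 1 - (i : ℝ)) * (((k : ℝ) - (i : ℝ) + 2 * nu)
              * (β i * (deriv^[i] f x * deriv^[k - i] g x))) := by
      intro i _
      rw [hs]
      ring
    rw [hS0β, mul_sum, mul_sum, ← sum_add_distrib, ← sum_sub_distrib, ← sum_sub_distrib,
      Finset.sum_congr rfl expand, sum_sub_distrib, sum_sub_distrib, hP, hQ, ← mul_sum]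
    linear_combination -hPQ
  rw [hc, hLB, deriv_Bop hf hg, e1, e2]
  have eB : Bop k r β f g x = r * S0β := by unfold Bop; rw [hS0β]
  rw [eB]
  linear_combination (-r) * key - (2 * x * S0β + 2 * S0γ) * hrs

/-- If `μ − λ − ν ≠ k+1`, then any 1-cocycle of the given homogeneous form (with
constant coefficients satisfying the cocycle relations) is the coboundary of
`b(f,g) = (1/(μ−λ−ν−k−1))·Σ β_i f^{(i)} g^{(k+1−i)}`. -/
theorem stmt_7 (k : ℕ) (lam nu mu : ℝ) (β γ : ℕ → ℝ)
    (hmu : mu - lam - nu ≠ (k : ℝ) + 1)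
    (hrel : ∀ i : ℕ, i ≤ k →
      2 * (mu - lam - nu - (k : ℝ) - 1) * γ i
        + ((i : ℝ) + 1) * ((i : ℝ) + 2 * lam) * β (i + 1)
        + ((k : ℝ) + 1 - (i : ℝ)) * ((k : ℝ) - (i : ℝ) + 2 * nu) * β i = 0) :
    ∀ h ∈ ({fun _ => 1, fun x => x, fun x => x ^ 2} : Set (ℝ → ℝ)),
    ∀ f g : ℝ → ℝ, ContDiff ℝ (⊤ : ℕ∞) f → ContDiff ℝ (⊤ : ℕ∞) g → ∀ x : ℝ,
      cochain k β γ h f g x =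
        Lop mu h (Bop k (1 / (mu - lam - nu - (k : ℝ) - 1)) β f g) x
          - Bop k (1 / (mu - lam - nu - (k : ℝ) - 1)) β (Lop lam h f) g x
          - Bop k (1 / (mu - lam - nu - (k : ℝ) - 1)) β f (Lop nu h g) x := by
  intro h hh f g hf hg x
  have hs0 : mu - lam - nu - (k : ℝ) - 1 ≠ 0 := fun h0 => hmu (by linarith)
  have hrs : (1 / (mu - lam - nu - (k : ℝ) - 1)) * (mu - lam - nu - (k : ℝ) - 1) = 1 :=
    one_div_mul_cancel hs0
  simp only [Set.mem_insert_iff, Set.mem_singleton_iff] at hh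
  rcases hh with rfl | rfl | rfl
  · exact case_one k lam nu mu _ β γ f g hf hg x
  · exact case_id k lam nu mu _ β γ hrs f g hf hg x
  · exact case_sq k lam nu mu _ β γ hrs hrel f g hf hg x
end

section
/- Let λ = −s/2 and ν = −t/2 with s, t ∈ {0,…,k} and s + t < k. Then the constants β_i = (−1)^i·C(k+1,i)·C(k−t−s−1, i−s−1) for s+1 ≤ i ≤ k−t (and β_i = 0 otherwise) satisfy the recursion (i+1)(i+2λ)β_{i+1} + (k+1−i)(k−i+2ν)β_i = 0 for all 0 ≤ i ≤ k. -/
/-!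
Inside the window `s + 1 ≤ i ≤ k - t`, `β` is the product of `(-1)^i C(k+1, i)` and
`C(k-t-s-1, i-s-1)`; each factor satisfies a first-order recursion coming from
`C(n, i+1) (i+1) = C(n, i) (n - i)`, and the two multiply to the claimed one because
`i + 2λ = i - s` and `k - i + 2ν = k - i - t`. As `s + t < k`, the second factor already vanishes
beyond `k - t`, so the upper end of the window needs no separate treatment, and at the lower end
`i = s` the coefficient `i - s` kills the only nonzero term.
-/

theorem Nat.cast_choose_succ_mul {R : Type*} [CommRing R] (n i : ℕ) :
    (n.choose (i + 1) : R) * (i + 1) = n.choose i * (n - i) := by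
  rcases le_or_gt i n with h | h
  · have := congrArg (Nat.cast : ℕ → R) (Nat.choose_succ_right_eq n i)
    push_cast [Nat.cast_sub h] at this
    exact this
  · simp [Nat.choose_eq_zero_of_lt h, Nat.choose_eq_zero_of_lt (h.trans (Nat.lt_succ_self i))]

theorem signed_choose_mul_choose_recursion {R : Type*} [CommRing R] {k s t i : ℕ}
    (hst : s + t < k) (hi : s + 1 ≤ i) :
    ((i : R) + 1) * (i - s) *
        ((-1) ^ (i + 1) * (k + 1).choose (i + 1) * (k - t - s - 1).choose (i + 1 - s - 1))
      + ((k : R) + 1 - i) * (k - i - t) *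
        ((-1) ^ i * (k + 1).choose i * (k - t - s - 1).choose (i - s - 1)) = 0 := by
  obtain ⟨j, rfl⟩ := Nat.exists_eq_add_of_le hi
  have hm : ((k - t - s - 1 : ℕ) : R) = k - t - s - 1 := by
    rw [Nat.cast_sub (by omega), Nat.cast_sub (by omega), Nat.cast_sub (by omega)]
    push_cast
    ring
  have h₁ := Nat.cast_choose_succ_mul (R := R) (k + 1) (s + 1 + j)
  have h₂ := Nat.cast_choose_succ_mul (R := R) (k - t - s - 1) j
  simp only [show s + 1 + j + 1 - s - 1 = j + 1 by omega, show s + 1 + j - s - 1 = j by omega,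
    hm] at h₂ ⊢
  push_cast at h₁ ⊢
  linear_combination (-(-1) ^ (s + 1 + j) : R) *
    ((k - t - s - 1).choose (j + 1) * (j + 1) * h₁
      + (k + 1).choose (s + 1 + j) * (k + 1 - (s + 1 + j)) * h₂)

theorem ite_window_choose_eq {R : Type*} [Semiring R] {k s t : ℕ} (hst : s + t < k) (i : ℕ)
    (x : R) :
    (if s + 1 ≤ i ∧ i ≤ k - t then x * (k - t - s - 1).choose (i - s - 1) else 0)
      = if s + 1 ≤ i then x * (k - t - s - 1).choose (i - s - 1) else 0 := by
  by_cases hi : i ≤ k - t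
  · simp only [hi, and_true]
  · rw [Nat.choose_eq_zero_of_lt (by omega)]
    simp

theorem stmt_10_general (k s t : ℕ) (hst : s + t < k)
    (lam nu : ℝ) (hlam : lam = -(s : ℝ) / 2) (hnu : nu = -(t : ℝ) / 2)
    (β : ℕ → ℝ)
    (hβ : ∀ i : ℕ, β i =
      if s + 1 ≤ i ∧ i ≤ k - t then
        (-1 : ℝ) ^ i * (Nat.choose (k + 1) i : ℝ) * (Nat.choose (k - t - s - 1) (i - s - 1) : ℝ)
      else 0) :
    ∀ i : ℕ, i ≤ k →
      ((i : ℝ) + 1) * ((i : ℝ) + 2 * lam) * β (i + 1)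
        + ((k : ℝ) + 1 - (i : ℝ)) * ((k : ℝ) - (i : ℝ) + 2 * nu) * β i = 0 := by
  intro i _
  subst hlam hnu
  simp only [hβ, ite_window_choose_eq hst]
  by_cases hi : s + 1 ≤ i
  · rw [if_pos hi, if_pos (by omega)]
    linear_combination signed_choose_mul_choose_recursion (R := ℝ) hst hi
  · rw [if_neg hi]
    rcases eq_or_ne i s with rfl | his
    · ring
    · rw [if_neg (by omega)]
      ring

/-- Let `λ = −s/2`, `ν = −t/2` with `s, t ∈ {0,…,k}` and `s + t < k`. The constants
`β_i = (−1)^i·C(k+1,i)·C(k−t−s−1, i−s−1)` for `s+1 ≤ i ≤ k−t` (and `β_i = 0`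
otherwise) satisfy `(i+1)(i+2λ)β_{i+1} + (k+1−i)(k−i+2ν)β_i = 0` for all `0 ≤ i ≤ k`. -/
theorem stmt_10 (k s t : ℕ) (hs : s ≤ k) (ht : t ≤ k) (hst : s + t < k)
    (lam nu : ℝ) (hlam : lam = -(s : ℝ) / 2) (hnu : nu = -(t : ℝ) / 2)
    (β : ℕ → ℝ)
    (hβ : ∀ i : ℕ, β i =
      if s + 1 ≤ i ∧ i ≤ k - t then
        (-1 : ℝ) ^ i * (Nat.choose (k + 1) i : ℝ) * (Nat.choose (k - t - s - 1) (i - s - 1) : ℝ)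
      else 0) :
    ∀ i : ℕ, i ≤ k →
      ((i : ℝ) + 1) * ((i : ℝ) + 2 * lam) * β (i + 1)
        + ((k : ℝ) + 1 - (i : ℝ)) * ((k : ℝ) - (i : ℝ) + 2 * nu) * β i = 0 :=
  stmt_10_general k s t hst lam nu hlam hnu β hβ
end

section
/- Let λ = −s/2 and ν = −t/2 with s, t ∈ {0,…,k} and s + t ≥ k. Then the map 𝔟(X_h, f, g) = h'' f^{(k−t)} g^{(t)} is a 1-cocycle of sl(2) = span(X_1, X_x, X_{x²}) with values in D_{λ,ν;μ} for μ = λ + ν + k + 1, i.e., 𝔟([X_{h₁},X_{h₂}],f,g) = X_{h₁}·𝔟(X_{h₂},f,g) − X_{h₂}·𝔟(X_{h₁},f,g) for h₁, h₂ ∈ span(1,x,x²). -/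
/-- The 1-cochain `𝔟(X_h,f,g) = h'' f^{(k−t)} g^{(t)}`. -/
noncomputable def bcochain (k t : ℕ) (h f g : ℝ → ℝ) : ℝ → ℝ :=
  fun x => deriv (deriv h) x * deriv^[k - t] f x * deriv^[t] g x

lemma diff_it {f : ℝ → ℝ} (hf : ContDiff ℝ (⊤ : ℕ∞) f) (n : ℕ) (x : ℝ) :
    DifferentiableAt ℝ (deriv^[n] f) x :=
  (((hf.of_le (by simp)).iterate_deriv n).differentiable (by simp)).differentiableAt

lemma it_succ (f : ℝ → ℝ) (n : ℕ) : deriv^[n] (deriv f) = deriv^[n+1] f :=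
  (Function.iterate_succ_apply deriv n f).symm

lemma Lop_one (mu : ℝ) (f : ℝ → ℝ) : Lop mu (fun _ => 1) f = deriv f := by
  funext x; simp [Lop]

lemma Lop_x (mu : ℝ) (f : ℝ → ℝ) : Lop mu (fun x => x) f = fun x => x * deriv f x + mu * f x := by
  funext x; simp [Lop]

lemma bc_one (k t : ℕ) (f g : ℝ → ℝ) : bcochain k t (fun _ => 1) f g = fun _ => 0 := by
  funext x; simp [bcochain]

lemma bc_x (k t : ℕ) (f g : ℝ → ℝ) : bcochain k t (fun x => x) f g = fun _ => 0 := by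
  funext x; simp [bcochain]

lemma bc_sq (k t : ℕ) (f g : ℝ → ℝ) :
    bcochain k t (fun x => x ^ 2) f g = fun x => 2 * (deriv^[k-t] f x * deriv^[t] g x) := by
  funext x
  have h1 : deriv (fun x : ℝ => x ^ 2) = fun x => 2 * x := by
    funext y; simp [mul_comm]
  have h2 : deriv (fun x : ℝ => 2 * x) x = 2 := by
    rw [deriv_const_mul_field]; simp
  simp [bcochain, h1, h2]; ring

lemma iter_xder (c : ℝ) {f : ℝ → ℝ} (hf : ContDiff ℝ (⊤ : ℕ∞) f) (n : ℕ) :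
    deriv^[n] (fun x => x * deriv f x + c * f x)
      = fun x => x * deriv^[n+1] f x + ((n : ℝ) + c) * deriv^[n] f x := by
  induction n with
  | zero => simp [Function.iterate_one]
  | succ n ih =>
    rw [Function.iterate_succ_apply', ih]
    funext x
    have h1 : DifferentiableAt ℝ (deriv^[n+1] f) x := diff_it hf _ x
    have h2 : DifferentiableAt ℝ (deriv^[n] f) x := diff_it hf _ x
    rw [deriv_fun_add ((differentiableAt_fun_id.fun_mul h1)) (h2.const_mul _),
      deriv_fun_mul differentiableAt_fun_id h1, deriv_const_mul _ h2]
    have e1 : deriv (deriv^[n+1] f) x = deriv^[n+1+1] f x := by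
      rw [Function.iterate_succ_apply' deriv (n+1) f]
    have e2 : deriv (deriv^[n] f) x = deriv^[n+1] f x := by
      rw [Function.iterate_succ_apply' deriv n f]
    rw [e1, e2, deriv_id'']
    push_cast
    ring

lemma Lop_zero (mu : ℝ) (h : ℝ → ℝ) : Lop mu h (fun _ => 0) = fun _ => 0 := by
  funext x; simp [Lop]

lemma bc_const (k t : ℕ) (c : ℝ) (f g : ℝ → ℝ) :
    bcochain k t (fun _ => c) f g = fun _ => 0 := by
  funext x; simp [bcochain]

lemma bc_linear (k t : ℕ) (a : ℝ) (f g : ℝ → ℝ) :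
    bcochain k t (fun y => a * y) f g = fun _ => 0 := by
  funext x
  have h1 : deriv (fun y : ℝ => a * y) = fun _ => a := by
    funext y; rw [deriv_const_mul_field]; simp
  simp [bcochain, h1]

lemma bc_sqc (k t : ℕ) (a : ℝ) (f g : ℝ → ℝ) :
    bcochain k t (fun y => a * y ^ 2) f g
      = fun x => 2 * a * (deriv^[k - t] f x * deriv^[t] g x) := by
  funext x
  have h1 : deriv (fun y : ℝ => a * y ^ 2) = fun y => a * (2 * y) := by
    funext y
    rw [deriv_const_mul_field]
    have : deriv (fun x : ℝ => x ^ 2) = fun x => 2 * x := by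
      funext z; simp [mul_comm]
    rw [this]
  have h2 : deriv (fun y : ℝ => a * (2 * y)) x = a * 2 := by
    rw [deriv_const_mul_field, deriv_const_mul_field]
    simp
  simp [bcochain, h1, h2]; ring

lemma deriv_two_mul (k t : ℕ) {f g : ℝ → ℝ} (hf : ContDiff ℝ (⊤ : ℕ∞) f) (hg : ContDiff ℝ (⊤ : ℕ∞) g) (x : ℝ) :
    deriv (fun y => 2 * (deriv^[k - t] f y * deriv^[t] g y)) x
      = 2 * (deriv^[k - t + 1] f x * deriv^[t] g x + deriv^[k - t] f x * deriv^[t + 1] g x) := by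
  rw [deriv_const_mul (d := fun y => deriv^[k - t] f y * deriv^[t] g y) _ ((diff_it hf (k-t) x).mul (diff_it hg t x)),
      deriv_fun_mul (diff_it hf _ x) (diff_it hg _ x),
      ← Function.iterate_succ_apply' deriv (k-t) f, ← Function.iterate_succ_apply' deriv t g]

lemma brkt_h2_one (k t : ℕ) (lam nu mu : ℝ) (h₁ f g : ℝ → ℝ) (x : ℝ) :
    Lop mu h₁ (bcochain k t (fun _ => 1) f g) x
      - bcochain k t (fun _ => 1) (Lop lam h₁ f) g x
      - bcochain k t (fun _ => 1) f (Lop nu h₁ g) x = 0 := by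
  simp [bc_one, Lop_zero]

lemma brkt_h2_x (k t : ℕ) (lam nu mu : ℝ) (h₁ f g : ℝ → ℝ) (x : ℝ) :
    Lop mu h₁ (bcochain k t (fun x => x) f g) x
      - bcochain k t (fun x => x) (Lop lam h₁ f) g x
      - bcochain k t (fun x => x) f (Lop nu h₁ g) x = 0 := by
  simp [bc_x, Lop_zero]

lemma brkt_one_sq (k t : ℕ) (lam nu mu : ℝ) {f g : ℝ → ℝ}
    (hf : ContDiff ℝ (⊤ : ℕ∞) f) (hg : ContDiff ℝ (⊤ : ℕ∞) g) (x : ℝ) :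
    Lop mu (fun _ => 1) (bcochain k t (fun x => x ^ 2) f g) x
      - bcochain k t (fun x => x ^ 2) (Lop lam (fun _ => 1) f) g x
      - bcochain k t (fun x => x ^ 2) f (Lop nu (fun _ => 1) g) x = 0 := by
  simp only [Lop_one, bc_sq]
  rw [deriv_two_mul k t hf hg, it_succ, it_succ]
  ring

lemma brkt_x_sq (k t : ℕ) (ht : t ≤ k) (lam nu mu : ℝ) (hmu : mu = lam + nu + k + 1)
    {f g : ℝ → ℝ} (hf : ContDiff ℝ (⊤ : ℕ∞) f) (hg : ContDiff ℝ (⊤ : ℕ∞) g) (x : ℝ) :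
    Lop mu (fun x => x) (bcochain k t (fun x => x ^ 2) f g) x
      - bcochain k t (fun x => x ^ 2) (Lop lam (fun x => x) f) g x
      - bcochain k t (fun x => x ^ 2) f (Lop nu (fun x => x) g) x
      = 2 * (deriv^[k - t] f x * deriv^[t] g x) := by
  simp only [Lop_x, bc_sq]
  rw [deriv_two_mul k t hf hg, iter_xder lam hf, iter_xder nu hg]
  have hc : ((k - t : ℕ) : ℝ) = (k : ℝ) - t := Nat.cast_sub ht
  subst hmu
  rw [hc]
  ring

/-- For `λ = −s/2`, `ν = −t/2` with `s, t ∈ {0,…,k}`, `s + t ≥ k`, and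
`μ = λ + ν + k + 1`, the map `𝔟(X_h,f,g) = h'' f^{(k−t)} g^{(t)}` is a 1-cocycle of
`sl(2) = span(X_1, X_x, X_{x²})` with values in `D_{λ,ν;μ}`. -/
theorem stmt_11 (k s t : ℕ) (hs : s ≤ k) (ht : t ≤ k) (hst : k ≤ s + t)
    (lam nu mu : ℝ) (hlam : lam = -(s : ℝ) / 2) (hnu : nu = -(t : ℝ) / 2)
    (hmu : mu = lam + nu + (k : ℝ) + 1) :
    ∀ h₁ ∈ ({fun _ => 1, fun x => x, fun x => x ^ 2} : Set (ℝ → ℝ)),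
    ∀ h₂ ∈ ({fun _ => 1, fun x => x, fun x => x ^ 2} : Set (ℝ → ℝ)),
    ∀ f g : ℝ → ℝ, ContDiff ℝ (⊤ : ℕ∞) f → ContDiff ℝ (⊤ : ℕ∞) g → ∀ x : ℝ,
      bcochain k t (fun y => h₁ y * deriv h₂ y - deriv h₁ y * h₂ y) f g x =
        (Lop mu h₁ (bcochain k t h₂ f g) x
          - bcochain k t h₂ (Lop lam h₁ f) g x
          - bcochain k t h₂ f (Lop nu h₁ g) x)
        - (Lop mu h₂ (bcochain k t h₁ f g) x
          - bcochain k t h₁ (Lop lam h₂ f) g x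
          - bcochain k t h₁ f (Lop nu h₂ g) x) := by
  intro h₁ hh₁ h₂ hh₂ f g hf hg x
  simp only [Set.mem_insert_iff, Set.mem_singleton_iff] at hh₁ hh₂
  have dsq : deriv (fun x : ℝ => x ^ 2) = fun x => 2 * x := by
    funext y; simp [mul_comm]
  rcases hh₁ with rfl | rfl | rfl <;> rcases hh₂ with rfl | rfl | rfl
  · -- (1,1)
    rw [show (fun y : ℝ => (1:ℝ) * deriv (fun _ => (1:ℝ)) y - deriv (fun _ => (1:ℝ)) y * 1)
        = (fun _ : ℝ => (0:ℝ)) from by funext y; simp, bc_const, sub_self]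
  · -- (1,x)
    rw [show (fun y : ℝ => (1:ℝ) * deriv (fun x : ℝ => x) y - deriv (fun _ => (1:ℝ)) y * y)
        = (fun _ : ℝ => (1:ℝ)) from by funext y; simp, bc_const]
    simp [bc_one, bc_x, Lop_zero]
  · -- (1,x²)
    rw [show (fun y : ℝ => (1:ℝ) * deriv (fun x : ℝ => x ^ 2) y - deriv (fun _ => (1:ℝ)) y * y ^ 2)
        = (fun y : ℝ => (2:ℝ) * y) from by funext y; simp [dsq], bc_linear,
      brkt_one_sq k t lam nu mu hf hg x, brkt_h2_one k t lam nu mu _ f g x]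
    norm_num
  · -- (x,1)
    rw [show (fun y : ℝ => y * deriv (fun _ => (1:ℝ)) y - deriv (fun x : ℝ => x) y * 1)
        = (fun _ : ℝ => (-1:ℝ)) from by funext y; simp, bc_const]
    simp [bc_one, bc_x, Lop_zero]
  · -- (x,x)
    rw [show (fun y : ℝ => y * deriv (fun x : ℝ => x) y - deriv (fun x : ℝ => x) y * y)
        = (fun _ : ℝ => (0:ℝ)) from by funext y; simp, bc_const, sub_self]
  · -- (x,x²)
    rw [show (fun y : ℝ => y * deriv (fun x : ℝ => x ^ 2) y - deriv (fun x : ℝ => x) y * y ^ 2)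
        = (fun y : ℝ => (1:ℝ) * y ^ 2) from by funext y; simp [dsq]; try ring, bc_sqc,
      brkt_x_sq k t ht lam nu mu hmu hf hg x, brkt_h2_x k t lam nu mu _ f g x]
    ring
  · -- (x²,1)
    rw [show (fun y : ℝ => y ^ 2 * deriv (fun _ => (1:ℝ)) y - deriv (fun x : ℝ => x ^ 2) y * 1)
        = (fun y : ℝ => (-2:ℝ) * y) from by funext y; simp [dsq]; try ring, bc_linear,
      brkt_one_sq k t lam nu mu hf hg x, brkt_h2_one k t lam nu mu _ f g x]
    norm_num
  · -- (x²,x)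
    rw [show (fun y : ℝ => y ^ 2 * deriv (fun x : ℝ => x) y - deriv (fun x : ℝ => x ^ 2) y * y)
        = (fun y : ℝ => (-1:ℝ) * y ^ 2) from by funext y; simp [dsq]; try ring, bc_sqc,
      brkt_x_sq k t ht lam nu mu hmu hf hg x, brkt_h2_x k t lam nu mu _ f g x]
    ring
  · -- (x²,x²)
    rw [show (fun y : ℝ => y ^ 2 * deriv (fun x : ℝ => x ^ 2) y - deriv (fun x : ℝ => x ^ 2) y * y ^ 2)
        = (fun _ : ℝ => (0:ℝ)) from by funext y; ring, bc_const, sub_self]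
end

section
/- Suppose A_k(h,f,g) = Σ_{i=0}^k c_i h f^{(i)} g^{(k−i)} + Σ_{i=0}^{k−1} d_i h' f^{(i)} g^{(k−i−1)} (constant coefficients, k ≥ 2) is sl(2)-invariant as a map H ⊗ F_λ ⊗ F_ν → F_μ with μ = λ + ν + k − 1/2. Then d_i = (i+1)(i+2λ)c_{i+1} + (k−i)(k−i−1+2ν)c_i for all 0 ≤ i ≤ k−1, and the c_i satisfy the recurrence (i+1)(i+2)(i+2λ)(i+2λ+1)c_{i+2} + 2(i+1)(k−i−1)(i+2λ)(k−i−2+2ν)c_{i+1} + (k−i−1)(k−i)(k−i−2+2ν)(k−i−1+2ν)c_i = 0 for 0 ≤ i ≤ k−2. -/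
lemma deriv_lin (p q y : ℝ) : deriv (fun z : ℝ => p + q * z) y = q := by
  have h : HasDerivAt (fun z : ℝ => p + q * z) q y := by
    simpa using ((hasDerivAt_id y).const_mul q).const_add p
  exact h.deriv

lemma deriv_quad (p q r y : ℝ) : deriv (fun z : ℝ => p + q * z + r * z ^ 2) y = q + 2 * r * y := by
  have h : HasDerivAt (fun z : ℝ => p + q * z + r * z ^ 2) (q + 2 * r * y) y := by
    have h1 : HasDerivAt (fun z : ℝ => p + q * z) q y := by
      simpa using ((hasDerivAt_id y).const_mul q).const_add p
    have h2 : HasDerivAt (fun z : ℝ => r * z ^ 2) (r * (2 * y)) y := by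
      simpa using (hasDerivAt_pow 2 y).const_mul r
    have : HasDerivAt (fun z : ℝ => p + q * z + r * z ^ 2) (q + r * (2 * y)) y := h1.add h2
    convert this using 1
    ring
  exact h.deriv

lemma hasDerivAt_exp_mul (a y : ℝ) :
    HasDerivAt (fun y : ℝ => Real.exp (a * y)) (a * Real.exp (a * y)) y := by
  have h : HasDerivAt (fun y : ℝ => a * y) a y := by simpa using (hasDerivAt_id y).const_mul a
  simpa [mul_comm] using h.exp

lemma deriv_exp_mul (a y : ℝ) : deriv (fun y : ℝ => Real.exp (a * y)) y = a * Real.exp (a * y) :=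
  (hasDerivAt_exp_mul a y).deriv

lemma contDiff_exp_mul (a : ℝ) : ContDiff ℝ (⊤ : ℕ∞) (fun y : ℝ => Real.exp (a * y)) :=
  Real.contDiff_exp.comp (contDiff_const.mul contDiff_id)

lemma iter_deriv_exp_mul (a : ℝ) (i : ℕ) :
    deriv^[i] (fun y : ℝ => Real.exp (a * y)) = fun y => a ^ i * Real.exp (a * y) := by
  induction i with
  | zero => simp
  | succ n ih =>
      rw [Function.iterate_succ_apply', ih]
      funext y
      have : HasDerivAt (fun y : ℝ => a ^ n * Real.exp (a * y)) (a ^ n * (a * Real.exp (a * y))) y :=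
        (hasDerivAt_exp_mul a y).const_mul _
      rw [this.deriv]; ring

lemma deriv_polyexp (a A B C y : ℝ) :
    deriv (fun y : ℝ => (A + B * y + C * y ^ 2) * Real.exp (a * y)) y
      = ((B + a * A) + (2 * C + a * B) * y + a * C * y ^ 2) * Real.exp (a * y) := by
  have h1 : HasDerivAt (fun y : ℝ => A + B * y + C * y ^ 2) (B + 2 * C * y) y := by
    have h2 : HasDerivAt (fun z : ℝ => A + B * z) B y := by
      simpa using ((hasDerivAt_id y).const_mul B).const_add A
    have h3 : HasDerivAt (fun z : ℝ => C * z ^ 2) (C * (2 * y)) y := by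
      simpa using (hasDerivAt_pow 2 y).const_mul C
    have : HasDerivAt (fun z : ℝ => A + B * z + C * z ^ 2) (B + C * (2 * y)) y := h2.add h3
    convert this using 1; ring
  have h : HasDerivAt (fun y : ℝ => (A + B * y + C * y ^ 2) * Real.exp (a * y))
      ((B + 2 * C * y) * Real.exp (a * y) + (A + B * y + C * y ^ 2) * (a * Real.exp (a * y))) y :=
    h1.mul (hasDerivAt_exp_mul a y)
  rw [h.deriv]; ring

lemma iter_deriv_polyexp (a α β γ : ℝ) (i : ℕ) :
    deriv^[i] (fun y : ℝ => (α + β * y + γ * y ^ 2) * Real.exp (a * y))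
      = fun y => ((α * a ^ i + (i : ℝ) * β * a ^ (i - 1) + (i : ℝ) * ((i : ℝ) - 1) * γ * a ^ (i - 2))
          + (β * a ^ i + 2 * (i : ℝ) * γ * a ^ (i - 1)) * y + γ * a ^ i * y ^ 2) * Real.exp (a * y) := by
  induction i with
  | zero => funext y; norm_num
  | succ n ih =>
      rw [Function.iterate_succ_apply', ih]
      funext y
      rw [deriv_polyexp]
      rcases n with _ | _ | m
      · norm_num; ring
      · norm_num; ring
      · have e1 : m + 2 - 1 = m + 1 := by omega
        have e2 : m + 2 - 2 = m := by omega
        have e3 : m + 2 + 1 - 1 = m + 2 := by omega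
        have e4 : m + 2 + 1 - 2 = m + 1 := by omega
        rw [e1, e2, e3, e4]
        push_cast
        ring

lemma iter_deriv_special (a l : ℝ) (i : ℕ) :
    deriv^[i] (fun y : ℝ => (2 * l * y + a * y ^ 2) * Real.exp (a * y)) 0
      = (i : ℝ) * ((i : ℝ) - 1 + 2 * l) * a ^ (i - 1) := by
  have h : (fun y : ℝ => (2 * l * y + a * y ^ 2) * Real.exp (a * y))
      = fun y : ℝ => (0 + 2 * l * y + a * y ^ 2) * Real.exp (a * y) := by
    funext y; ring_nf
  rw [h, iter_deriv_polyexp]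
  simp only [mul_zero, Real.exp_zero]
  rcases i with _ | _ | m
  · norm_num
  · norm_num
  · have e1 : m + 2 - 1 = m + 1 := by omega
    have e2 : m + 2 - 2 = m := by omega
    rw [e1, e2]
    push_cast
    ring

lemma poly_coeff_zero (n : ℕ) (e : ℕ → ℝ)
    (h : ∀ a : ℝ, ∑ i ∈ Finset.range n, e i * a ^ i = 0) : ∀ j, j < n → e j = 0 := by
  intro j hj
  have hP : (∑ i ∈ Finset.range n, Polynomial.monomial i (e i)) = (0 : Polynomial ℝ) := by
    apply Polynomial.funext
    intro r
    rw [Polynomial.eval_finset_sum]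
    simpa [Polynomial.eval_monomial] using h r
  have := congrArg (fun P : Polynomial ℝ => P.coeff j) hP
  simpa [Polynomial.finset_sum_coeff, Polynomial.coeff_monomial, Finset.sum_ite_eq,
    Finset.mem_range, hj] using this

/-- The operator `A_k(h,f,g) = Σ_{i=0}^{k} c_i h f^{(i)} g^{(k−i)} + Σ_{i=0}^{k−1} d_i h' f^{(i)} g^{(k−i−1)}`. -/
noncomputable def Ak (k : ℕ) (c d : ℕ → ℝ) (h f g : ℝ → ℝ) : ℝ → ℝ :=
  fun x => (∑ i ∈ Finset.range (k + 1), c i * h x * deriv^[i] f x * deriv^[k - i] g x)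
    + (∑ i ∈ Finset.range k, d i * deriv h x * deriv^[i] f x * deriv^[k - i - 1] g x)

/-- If `A_k` (constant coefficients, `k ≥ 2`) is `sl(2)`-invariant as a map
`H ⊗ F_λ ⊗ F_ν → F_μ` with `μ = λ+ν+k−1/2`, then
`d_i = (i+1)(i+2λ)c_{i+1} + (k−i)(k−i−1+2ν)c_i` for `0 ≤ i ≤ k−1`, and the `c_i`
satisfy the recurrence
`(i+1)(i+2)(i+2λ)(i+2λ+1)c_{i+2} + 2(i+1)(k−i−1)(i+2λ)(k−i−2+2ν)c_{i+1}
 + (k−i−1)(k−i)(k−i−2+2ν)(k−i−1+2ν)c_i = 0` for `0 ≤ i ≤ k−2`. -/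
theorem stmt_16 (k : ℕ) (hk : 2 ≤ k) (lam nu mu : ℝ) (c d : ℕ → ℝ)
    (hmu : mu = lam + nu + (k : ℝ) - 1 / 2)
    (hinv : ∀ p q r : ℝ, ∀ p₁ q₁ : ℝ, ∀ f g : ℝ → ℝ,
      ContDiff ℝ (⊤ : ℕ∞) f → ContDiff ℝ (⊤ : ℕ∞) g → ∀ x : ℝ,
        (p + q * x + r * x ^ 2) * deriv (Ak k c d (fun y => p₁ + q₁ * y) f g) x
            + mu * deriv (fun z => p + q * z + r * z ^ 2) x *
              Ak k c d (fun y => p₁ + q₁ * y) f g x =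
          Ak k c d
              (fun y => (p + q * y + r * y ^ 2) * deriv (fun z => p₁ + q₁ * z) y
                - (1 / 2) * deriv (fun z => p + q * z + r * z ^ 2) y * (p₁ + q₁ * y)) f g x
            + Ak k c d (fun y => p₁ + q₁ * y)
                (fun y => (p + q * y + r * y ^ 2) * deriv f y
                  + lam * deriv (fun z => p + q * z + r * z ^ 2) y * f y) g x
            + Ak k c d (fun y => p₁ + q₁ * y) f
                (fun y => (p + q * y + r * y ^ 2) * deriv g y
                  + nu * deriv (fun z => p + q * z + r * z ^ 2) y * g y) x) :
    (∀ i : ℕ, i ≤ k - 1 →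
      d i = ((i : ℝ) + 1) * ((i : ℝ) + 2 * lam) * c (i + 1)
        + ((k : ℝ) - (i : ℝ)) * ((k : ℝ) - (i : ℝ) - 1 + 2 * nu) * c i) ∧
    (∀ i : ℕ, i ≤ k - 2 →
      ((i : ℝ) + 1) * ((i : ℝ) + 2) * ((i : ℝ) + 2 * lam) * ((i : ℝ) + 2 * lam + 1) * c (i + 2)
        + 2 * ((i : ℝ) + 1) * ((k : ℝ) - (i : ℝ) - 1) * ((i : ℝ) + 2 * lam) *
            ((k : ℝ) - (i : ℝ) - 2 + 2 * nu) * c (i + 1)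
        + ((k : ℝ) - (i : ℝ) - 1) * ((k : ℝ) - (i : ℝ)) * ((k : ℝ) - (i : ℝ) - 2 + 2 * nu) *
            ((k : ℝ) - (i : ℝ) - 1 + 2 * nu) * c i = 0) := by
  have deriv_nmul : ∀ p y : ℝ, deriv (fun y : ℝ => -p * y) y = -p := by
    intro p y; simpa using ((hasDerivAt_id y).const_mul (-p)).deriv
  have deriv_sq : ∀ y : ℝ, deriv (fun z : ℝ => z ^ 2) y = 2 * y := by
    intro y; simpa using (hasDerivAt_pow 2 y).deriv
  have hfun1 : ∀ p₁ q₁ : ℝ, (fun y : ℝ => (0 + 0 * y + 1 * y ^ 2) * deriv (fun z => p₁ + q₁ * z) y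
      - 1 / 2 * deriv (fun z => 0 + 0 * z + 1 * z ^ 2) y * (p₁ + q₁ * y)) = fun y => -p₁ * y := by
    intro p₁ q₁; funext y; rw [deriv_lin, deriv_quad]; ring
  have hfun2 : ∀ (l a : ℝ), (fun y : ℝ => (0 + 0 * y + 1 * y ^ 2) * deriv (fun y => Real.exp (a * y)) y
      + l * deriv (fun z => 0 + 0 * z + 1 * z ^ 2) y * Real.exp (a * y))
      = fun y => (2 * l * y + a * y ^ 2) * Real.exp (a * y) := by
    intro l a; funext y; rw [deriv_exp_mul, deriv_quad]; ring
  have key1 : ∀ a b : ℝ, (0 : ℝ) =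
      -∑ x ∈ Finset.range k, d x * a ^ x * b ^ (k - x - 1) +
        ∑ x ∈ Finset.range (k + 1), c x * (↑x * (↑x - 1 + 2 * lam) * a ^ (x - 1)) * b ^ (k - x) +
        ∑ x ∈ Finset.range (k + 1), c x * a ^ x * (↑(k - x) * (↑(k - x) - 1 + 2 * nu) * b ^ (k - x - 1)) := by
    intro a b
    have E1 := hinv 0 0 1 1 0 (fun y => Real.exp (a * y)) (fun y => Real.exp (b * y))
      (contDiff_exp_mul a) (contDiff_exp_mul b) 0
    beta_reduce at E1
    rw [hfun1, hfun2, hfun2] at E1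
    simp only [Ak, iter_deriv_exp_mul, iter_deriv_special, deriv_lin, deriv_quad, deriv_nmul,
      deriv_sq, deriv_const', mul_zero, zero_mul, neg_zero, Real.exp_zero, mul_one, one_pow,
      add_zero, zero_add, Finset.sum_const_zero, one_mul, neg_mul] at E1
    norm_num at E1
    exact E1
  have key2 : ∀ a b : ℝ, (0 : ℝ) =
      ∑ x ∈ Finset.range k, d x * (↑x * (↑x - 1 + 2 * lam) * a ^ (x - 1)) * b ^ (k - x - 1) +
        ∑ x ∈ Finset.range k, d x * a ^ x * (↑(k - x - 1) * (↑(k - x - 1) - 1 + 2 * nu) * b ^ (k - x - 1 - 1)) := by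
    intro a b
    have E1 := hinv 0 0 1 0 1 (fun y => Real.exp (a * y)) (fun y => Real.exp (b * y))
      (contDiff_exp_mul a) (contDiff_exp_mul b) 0
    beta_reduce at E1
    rw [hfun1, hfun2, hfun2] at E1
    simp only [Ak, iter_deriv_exp_mul, iter_deriv_special, deriv_lin, deriv_quad, deriv_nmul,
      deriv_sq, deriv_const', mul_zero, zero_mul, neg_zero, Real.exp_zero, mul_one, one_pow,
      add_zero, zero_add, Finset.sum_const_zero, one_mul, neg_mul] at E1
    norm_num at E1
    exact E1
  -- first conclusion
  have he1 : ∀ j, j < k → d j = ((j : ℝ) + 1) * ((j : ℝ) + 2 * lam) * c (j + 1)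
      + ((k : ℝ) - (j : ℝ)) * ((k : ℝ) - (j : ℝ) - 1 + 2 * nu) * c j := by
    have hz : ∀ a : ℝ, ∑ i ∈ Finset.range k,
        (((i : ℝ) + 1) * ((i : ℝ) + 2 * lam) * c (i + 1)
          + ((k : ℝ) - (i : ℝ)) * ((k : ℝ) - (i : ℝ) - 1 + 2 * nu) * c i - d i) * a ^ i = 0 := by
      intro a
      have E := key1 a 1
      simp only [one_pow, mul_one] at E
      have S1 : ∑ x ∈ Finset.range (k + 1), c x * (↑x * (↑x - 1 + 2 * lam) * a ^ (x - 1))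
          = ∑ i ∈ Finset.range k, ((i : ℝ) + 1) * ((i : ℝ) + 2 * lam) * c (i + 1) * a ^ i := by
        rw [Finset.sum_range_succ']
        norm_num
        exact Finset.sum_congr rfl fun i hi => by ring
      have S2 : ∑ x ∈ Finset.range (k + 1), c x * a ^ x * (↑(k - x) * (↑(k - x) - 1 + 2 * nu))
          = ∑ i ∈ Finset.range k, ((k : ℝ) - (i : ℝ)) * ((k : ℝ) - (i : ℝ) - 1 + 2 * nu) * c i * a ^ i := by
        rw [Finset.sum_range_succ, Nat.sub_self]
        norm_num
        exact Finset.sum_congr rfl fun i hi => by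
          rw [Nat.cast_sub (Finset.mem_range.mp hi).le]; ring
      calc ∑ i ∈ Finset.range k,
            (((i : ℝ) + 1) * ((i : ℝ) + 2 * lam) * c (i + 1)
              + ((k : ℝ) - (i : ℝ)) * ((k : ℝ) - (i : ℝ) - 1 + 2 * nu) * c i - d i) * a ^ i
          = ∑ i ∈ Finset.range k, (((i : ℝ) + 1) * ((i : ℝ) + 2 * lam) * c (i + 1) * a ^ i
              + ((k : ℝ) - (i : ℝ)) * ((k : ℝ) - (i : ℝ) - 1 + 2 * nu) * c i * a ^ i
              - d i * a ^ i) := Finset.sum_congr rfl fun i _ => by ring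
        _ = ∑ i ∈ Finset.range k, (((i : ℝ) + 1) * ((i : ℝ) + 2 * lam) * c (i + 1) * a ^ i
              + ((k : ℝ) - (i : ℝ)) * ((k : ℝ) - (i : ℝ) - 1 + 2 * nu) * c i * a ^ i)
            - ∑ i ∈ Finset.range k, d i * a ^ i := Finset.sum_sub_distrib _ _
        _ = (∑ i ∈ Finset.range k, ((i : ℝ) + 1) * ((i : ℝ) + 2 * lam) * c (i + 1) * a ^ i
              + ∑ i ∈ Finset.range k, ((k : ℝ) - (i : ℝ)) * ((k : ℝ) - (i : ℝ) - 1 + 2 * nu) * c i * a ^ i)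
            - ∑ i ∈ Finset.range k, d i * a ^ i := by rw [Finset.sum_add_distrib]
        _ = 0 := by rw [← S1, ← S2]; linarith [E]
    intro j hj
    have := poly_coeff_zero k _ hz j hj
    linarith [this]
  -- second: relation among the d's
  have he2 : ∀ j, j < k - 1 →
      ((j : ℝ) + 1) * ((j : ℝ) + 2 * lam) * d (j + 1)
        + ((k : ℝ) - (j : ℝ) - 1) * ((k : ℝ) - (j : ℝ) - 2 + 2 * nu) * d j = 0 := by
    have hz : ∀ a : ℝ, ∑ i ∈ Finset.range (k - 1),
        (((i : ℝ) + 1) * ((i : ℝ) + 2 * lam) * d (i + 1)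
          + ((k : ℝ) - (i : ℝ) - 1) * ((k : ℝ) - (i : ℝ) - 2 + 2 * nu) * d i) * a ^ i = 0 := by
      intro a
      have E := key2 a 1
      simp only [one_pow, mul_one] at E
      obtain ⟨m, hm⟩ : ∃ m, k = m + 1 := ⟨k - 1, by omega⟩
      subst hm
      simp only [Nat.add_sub_cancel] at E ⊢
      have S1 : ∑ x ∈ Finset.range (m + 1), d x * (↑x * (↑x - 1 + 2 * lam) * a ^ (x - 1))
          = ∑ i ∈ Finset.range m, ((i : ℝ) + 1) * ((i : ℝ) + 2 * lam) * d (i + 1) * a ^ i := by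
        rw [Finset.sum_range_succ']
        norm_num
        exact Finset.sum_congr rfl fun i hi => by ring
      have S2 : ∑ x ∈ Finset.range (m + 1), d x * a ^ x * (↑(m + 1 - x - 1) * (↑(m + 1 - x - 1) - 1 + 2 * nu))
          = ∑ i ∈ Finset.range m, ((m : ℝ) - (i : ℝ)) * ((m : ℝ) - (i : ℝ) - 1 + 2 * nu) * d i * a ^ i := by
        rw [Finset.sum_range_succ, show m + 1 - m - 1 = 0 from by omega]
        norm_num
        exact Finset.sum_congr rfl fun i hi => by
          rw [show m + 1 - i - 1 = m - i from by omega,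
            Nat.cast_sub (Finset.mem_range.mp hi).le]; ring
      calc ∑ i ∈ Finset.range m,
            (((i : ℝ) + 1) * ((i : ℝ) + 2 * lam) * d (i + 1)
              + ((↑(m + 1) : ℝ) - (i : ℝ) - 1) * ((↑(m + 1) : ℝ) - (i : ℝ) - 2 + 2 * nu) * d i) * a ^ i
          = ∑ i ∈ Finset.range m, (((i : ℝ) + 1) * ((i : ℝ) + 2 * lam) * d (i + 1) * a ^ i
              + ((m : ℝ) - (i : ℝ)) * ((m : ℝ) - (i : ℝ) - 1 + 2 * nu) * d i * a ^ i) :=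
            Finset.sum_congr rfl fun i _ => by push_cast; ring
        _ = ∑ i ∈ Finset.range m, ((i : ℝ) + 1) * ((i : ℝ) + 2 * lam) * d (i + 1) * a ^ i
              + ∑ i ∈ Finset.range m, ((m : ℝ) - (i : ℝ)) * ((m : ℝ) - (i : ℝ) - 1 + 2 * nu) * d i * a ^ i :=
            Finset.sum_add_distrib
        _ = 0 := by rw [← S1, ← S2]; linarith [E]
    intro j hj
    have := poly_coeff_zero (k - 1) _ hz j hj
    linarith [this]
  constructor
  · intro i hi
    exact he1 i (by omega)
  · intro i hi
    have h1 := he1 i (by omega)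
    have h2 := he1 (i + 1) (by omega)
    have h3 := he2 i (by omega)
    push_cast at h2
    rw [show i + 1 + 1 = i + 2 from by omega] at h2
    linear_combination h3 - ((i : ℝ) + 1) * ((i : ℝ) + 2 * lam) * h2
      - ((k : ℝ) - (i : ℝ) - 1) * ((k : ℝ) - (i : ℝ) - 2 + 2 * nu) * h1
end

section
/- Let λ = ν = 0, μ = 1/2 (so k = −1 in the notation μ − λ − ν = k + 3/2). Define Υ on sl(2) ⊂ osp(1|2) by Υ(X_h)(F,G) = α·(h'(f₁g₀ + f₀g₁ − θf₀g₀' − θf₀'g₀) − θh''f₀g₀) and on odd generators by Υ(X_{h₁θ})(F,G) = α·θh₁'FG, where F = f₀ + f₁θ, G = g₀ + g₁θ and h ∈ span(1,x,x²), h₁ ∈ span(1,x). Then Υ satisfies the 1-cocycle condition δΥ(X_x, X_θ)(F,G) = 0. -/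
/-- A function `F(x,θ) = f₀(x) + f₁(x)θ` on `ℝ^{1|1}` is encoded by the pair `(f₀, f₁)`. -/
abbrev SF := (ℝ → ℝ) × (ℝ → ℝ)

/-- Product of superfunctions (`θ² = 0`). -/
noncomputable def sfMul (F G : SF) : SF :=
  (fun x => F.1 x * G.1 x, fun x => F.1 x * G.2 x + F.2 x * G.1 x)

/-- `∂_x` on superfunctions. -/
noncomputable def sfDx (F : SF) : SF := (deriv F.1, deriv F.2)

/-- `∂_θ` on superfunctions. -/
noncomputable def sfDth (F : SF) : SF := (F.2, 0)

/-- A vector field `V = P∂_x + Q∂_θ` acting on a superfunction. -/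
noncomputable def vact (V : SF × SF) (F : SF) : SF :=
  sfMul V.1 (sfDx F) + sfMul V.2 (sfDth F)

/-- The contact vector field `X_H = H∂_x + (1/2)η(H)η̄` in the form `P∂_x + Q∂_θ`. -/
noncomputable def XH (H : SF) : SF × SF :=
  ((H.1, fun x => H.2 x / 2), (fun x => H.2 x / 2, fun x => deriv H.1 x / 2))

/-- The super Lie derivative on `λ`-densities: `𝔏^λ_{X_H}(F) = X_H(F) + λH'F`. -/
noncomputable def superLie (lam : ℝ) (H F : SF) : SF :=
  vact (XH H) F + lam • sfMul (sfDx H) F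

/-- The parity-flip `F = f₀ + f₁θ ↦ (−1)^{|·|}F = f₀ − f₁θ` (used in the sign
`(−1)^{|H||F|}` of the Leibniz rule for odd `H`). -/
noncomputable def sfSigma (F : SF) : SF := (F.1, fun x => -F.2 x)

/-- `Υ` on even generators `X_h`:
`Υ(X_h)(F,G) = α·(h'(f₁g₀ + f₀g₁ − θf₀g₀' − θf₀'g₀) − θh''f₀g₀)`. -/
noncomputable def Yev (α : ℝ) (h : ℝ → ℝ) (F G : SF) : SF :=
  (fun x => α * (deriv h x * (F.2 x * G.1 x + F.1 x * G.2 x)),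
   fun x => α * (-(deriv h x * (F.1 x * deriv G.1 x + deriv F.1 x * G.1 x))
     - deriv (deriv h) x * F.1 x * G.1 x))

/-- `Υ` on odd generators `X_{h₁θ}`: `Υ(X_{h₁θ})(F,G) = α·θh₁'FG`. -/
noncomputable def Yod (α : ℝ) (h₁ : ℝ → ℝ) (F G : SF) : SF :=
  (0, fun x => α * deriv h₁ x * F.1 x * G.1 x)

/-- For `λ = ν = 0`, `μ = 1/2`, the map `Υ` defined on `sl(2)` by
`Υ(X_h)(F,G) = α(h'(f₁g₀+f₀g₁−θf₀g₀'−θf₀'g₀) − θh''f₀g₀)` and on odd generators by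
`Υ(X_{h₁θ})(F,G) = αθh₁'FG` satisfies the 1-cocycle condition
`δΥ(X_x, X_θ)(F,G) = 0`, where
`δΥ(X,Y) = (−1)^{|X||Υ|}X·Υ(Y) − (−1)^{|Y|(|X|+|Υ|)}Y·Υ(X) − Υ([X,Y])`,
`[X_x,X_θ] = X_{−(1/2)θ}`, and the action on bilinear operators is
`X_H·A = 𝔏^{1/2}_{X_H}∘A − (−1)^{|A||H|}A∘𝔏^{(0,0)}_{X_H}`. -/
theorem stmt_19 (α : ℝ) (F G : SF)
    (hF1 : ContDiff ℝ (⊤ : ℕ∞) F.1) (hF2 : ContDiff ℝ (⊤ : ℕ∞) F.2)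
    (hG1 : ContDiff ℝ (⊤ : ℕ∞) G.1) (hG2 : ContDiff ℝ (⊤ : ℕ∞) G.2) :
    -- X_x·Υ(X_θ)  (X_x even, Υ(X_θ) even)
    ((superLie (1 / 2) ((fun x => x, 0) : SF) (Yod α (fun _ => 1) F G)
        - (Yod α (fun _ => 1) (superLie 0 ((fun x => x, 0) : SF) F) G
          + Yod α (fun _ => 1) F (superLie 0 ((fun x => x, 0) : SF) G)))
    -- + X_θ·Υ(X_x)  (sign −(−1)^{|X_θ|(|X_x|+|Υ|)} = +1; Υ(X_x) odd, X_θ odd)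
      + (superLie (1 / 2) ((0, fun _ => 1) : SF) (Yev α (fun x => x) F G)
        + (Yev α (fun x => x) (superLie 0 ((0, fun _ => 1) : SF) F) G
          + Yev α (fun x => x) (sfSigma F) (superLie 0 ((0, fun _ => 1) : SF) G)))
    -- − Υ([X_x, X_θ]) = − Υ(X_{−(1/2)θ})
      - Yod α (fun _ => -(1 / 2)) F G) = (0 : SF) := by
  have dF1 := hF1.differentiable (by simp)
  have dF2 := hF2.differentiable (by simp)
  have dG1 := hG1.differentiable (by simp)
  have dG2 := hG2.differentiable (by simp)
  have d0 : ∀ y : ℝ, deriv (0 : ℝ → ℝ) y = 0 := fun y => deriv_const y 0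
  -- superLie 0 X_x on a superfunction
  have hA : ∀ K : SF, superLie 0 ((fun x => x, 0) : SF) K
      = (fun x => x * deriv K.1 x, fun x => x * deriv K.2 x + K.2 x / 2) := by
    intro K
    refine Prod.ext ?_ ?_ <;> funext x <;>
      simp [superLie, vact, XH, sfMul, sfDx, sfDth, d0] <;> ring
  -- superLie 0 X_θ on a superfunction
  have hB : ∀ K : SF, superLie 0 ((0, fun _ => 1) : SF) K
      = (fun x => K.2 x / 2, fun x => deriv K.1 x / 2) := by
    intro K
    refine Prod.ext ?_ ?_ <;> funext x <;>
      simp [superLie, vact, XH, sfMul, sfDx, sfDth, d0] <;> ring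
  -- Yod with constant h₁ vanishes
  have hYod : ∀ (c : ℝ) (K L : SF), Yod α (fun _ => c) K L = (0, 0) := by
    intro c K L
    refine Prod.ext ?_ ?_ <;> funext x <;> simp [Yod]
  -- superLie (1/2) X_x of (0,0) is (0,0)
  have hZ : superLie (1/2) ((fun x => x, 0) : SF) ((0 : ℝ → ℝ), (0 : ℝ → ℝ)) = (0, 0) := by
    refine Prod.ext ?_ ?_ <;> funext x <;>
      simp [superLie, vact, XH, sfMul, sfDx, sfDth, d0]
  -- Yev with h = id
  have hYev : ∀ K L : SF, Yev α (fun x => x) K L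
      = (fun x => α * (K.2 x * L.1 x + K.1 x * L.2 x),
         fun x => α * (-(K.1 x * deriv L.1 x + deriv K.1 x * L.1 x))) := by
    intro K L
    refine Prod.ext ?_ ?_ <;> funext x <;> simp [Yev]
  -- superLie (1/2) X_θ action
  have hC : ∀ K : SF, superLie (1/2) ((0, fun _ => 1) : SF) K
      = (fun x => K.2 x / 2, fun x => deriv K.1 x / 2) := by
    intro K
    refine Prod.ext ?_ ?_ <;> funext x <;>
      simp [superLie, vact, XH, sfMul, sfDx, sfDth, d0] <;> ring
  rw [hA F, hA G, hB F, hB G, hYod, hYod, hYod, hZ, hYev F G, hC, hYev, hYev]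
  have dd1 : ∀ x, deriv (fun x => α * (F.2 x * G.1 x + F.1 x * G.2 x)) x
      = α * (deriv F.2 x * G.1 x + F.2 x * deriv G.1 x
        + (deriv F.1 x * G.2 x + F.1 x * deriv G.2 x)) := by
    intro x
    rw [deriv_const_mul _ (show DifferentiableAt ℝ (fun y => F.2 y * G.1 y + F.1 y * G.2 y) x from
        ((dF2 x).mul (dG1 x)).add ((dF1 x).mul (dG2 x))),
      deriv_fun_add (show DifferentiableAt ℝ (fun y => F.2 y * G.1 y) x from (dF2 x).mul (dG1 x))
        (show DifferentiableAt ℝ (fun y => F.1 y * G.2 y) x from (dF1 x).mul (dG2 x)),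
      deriv_fun_mul (dF2 x) (dG1 x), deriv_fun_mul (dF1 x) (dG2 x)]
  have dd2 : ∀ x, deriv (fun x => F.2 x / 2) x = deriv F.2 x / 2 := by
    intro x; rw [deriv_div_const]
  have dd3 : ∀ x, deriv (fun x => G.2 x / 2) x = deriv G.2 x / 2 := by
    intro x; rw [deriv_div_const]
  refine Prod.ext ?_ ?_ <;> funext x <;>
    simp only [sfSigma, Prod.fst_add, Prod.snd_add, Prod.fst_sub, Prod.snd_sub,
      Pi.add_apply, Pi.sub_apply] <;>
    simp [hYod, dd1, dd2, dd3, Pi.add_apply, Pi.sub_apply] <;> ring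
end
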